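/- arXiv:2111.06307 — 7 statements merged into one kernel-verified Lean document; each statement's English description precedes it below -/
import Mathlib

section
/- For every n ≥ 1, the map that sends a word w ∈ {0,1}^{n−1} to the isomorphism class of the convex linear order obtained from the one-point convex linear order • by successively applying, for each letter of w in order, the operation C ↦ C ⊕ • (if the letter is 0) or C ↦ Ĉ (if the letter is 1), is a bijection from {0,1}^{n−1} onto the set of isomorphism classes of convex linear orders with n points. -/
open FirstOrder Language Filter

/-- Relation symbols for the language with two binary relation symbols. -/
inductive TwoRelSym : ℕ → Type
  | s1 : TwoRelSym 2
  | s2 : TwoRelSym 2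

/-- The first-order language with two binary relation symbols. -/
def L2 : FirstOrder.Language := ⟨fun _ => Empty, TwoRelSym⟩

/-- A pair of binary relations on `X`. -/
structure Rel2 (X : Type) : Type where
  r1 : X → X → Prop
  r2 : X → X → Prop

/-- The `L2`-structure on `X` determined by a pair of binary relations. -/
def Rel2.str {X : Type} (R : Rel2 X) : L2.Structure X where
  funMap := fun f _ => Empty.elim f
  RelMap | .s1 => fun v => R.r1 (v 0) (v 1)
         | .s2 => fun v => R.r2 (v 0) (v 1)

/-- Satisfaction of an `L2`-sentence in the structure given by a pair of relations. -/
def Rel2.Sat {X : Type} (R : Rel2 X) (φ : L2.Sentence) : Prop :=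
  @FirstOrder.Language.Sentence.Realize L2 X R.str φ

namespace FirstOrder.Language.BoundedFormula

/-- The quantifier depth of a first-order formula. -/
def qdepth {L : FirstOrder.Language} {α : Type*} : {n : ℕ} → L.BoundedFormula α n → ℕ
  | _, falsum => 0
  | _, equal _ _ => 0
  | _, rel _ _ => 0
  | _, imp f g => max (qdepth f) (qdepth g)
  | _, all f => qdepth f + 1

end FirstOrder.Language.BoundedFormula

/-- `r` is a strict linear order. -/
def IsSLO {X : Type} (r : X → X → Prop) : Prop :=
  (∀ a, ¬ r a a) ∧ (∀ a b c, r a b → r b c → r a c) ∧ (∀ a b, a ≠ b → r a b ∨ r b a)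

/-- `(r1, r2)` is a convex linear order: `r1` is a strict linear order, `r2` is an
equivalence relation whose classes are `r1`-intervals. -/
def IsConvex {X : Type} (R : Rel2 X) : Prop :=
  IsSLO R.r1 ∧ Equivalence R.r2 ∧
    ∀ a b c, R.r2 a b → R.r1 a c → R.r1 c b → R.r2 a c ∧ R.r2 c b

/-- Isomorphism of pairs of binary relations. -/
def Rel2.Iso {X Y : Type} (R : Rel2 X) (S : Rel2 Y) : Prop :=
  ∃ e : X ≃ Y, (∀ a b, R.r1 a b ↔ S.r1 (e a) (e b)) ∧ (∀ a b, R.r2 a b ↔ S.r2 (e a) (e b))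

/-- Two structures agree on all sentences of quantifier depth at most `k`. -/
def EqK {X Y : Type} (k : ℕ) (R : Rel2 X) (S : Rel2 Y) : Prop :=
  ∀ φ : L2.Sentence, FirstOrder.Language.BoundedFormula.qdepth φ ≤ k → (R.Sat φ ↔ S.Sat φ)

/-- The sum `C ⊕ D` of two convex linear orders: everything in `C` comes before
everything in `D`, with no equivalences across the two parts. -/
def Rel2.oplus {X Y : Type} (R : Rel2 X) (S : Rel2 Y) : Rel2 (X ⊕ Y) where
  r1 a b := match a, b with
    | .inl a, .inl b => R.r1 a b
    | .inl _, .inr _ => True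
    | .inr _, .inl _ => False
    | .inr a, .inr b => S.r1 a b
  r2 a b := match a, b with
    | .inl a, .inl b => R.r2 a b
    | .inr a, .inr b => S.r2 a b
    | _, _ => False

/-- `a` lies in the last `r2`-class: every point above it is equivalent to it. -/
def Rel2.inLast {X : Type} (R : Rel2 X) (a : X) : Prop := ∀ b, R.r1 a b → R.r2 a b

/-- `Ĉ`: add a new greatest point, equivalent exactly to the members of the last class. -/
def Rel2.hat {X : Type} (R : Rel2 X) : Rel2 (Option X) where
  r1 a b := match a, b with
    | some a, some b => R.r1 a b
    | some _, none => True
    | none, _ => False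
  r2 a b := match a, b with
    | some a, some b => R.r2 a b
    | some a, none => R.inLast a
    | none, some b => R.inLast b
    | none, none => True

/-- The one-point convex linear order `•`. -/
def pointR : Rel2 PUnit := ⟨fun _ _ => False, fun _ _ => True⟩

/-- The number of pairs of relations on `{1, …, n}` satisfying `P`. -/
noncomputable def labCount (n : ℕ) (P : Rel2 (Fin n) → Prop) : ℕ :=
  Nat.card {R : Rel2 (Fin n) // P R}

/-- The number of isomorphism classes of pairs of relations on `{1, …, n}` satisfying `P`. -/
noncomputable def unlabCount (n : ℕ) (P : Rel2 (Fin n) → Prop) : ℕ :=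
  Nat.card (Quot (fun R S : {R : Rel2 (Fin n) // P R} => Rel2.Iso R.1 S.1))

/-- Apply the operations coded by a word (last letter applied outermost):
`false` codes `C ↦ C ⊕ •` and `true` codes `C ↦ Ĉ`. -/
def buildAux : List Bool → (X : Type) × Rel2 X
  | [] => ⟨PUnit, pointR⟩
  | false :: w => ⟨(buildAux w).1 ⊕ PUnit, (buildAux w).2.oplus pointR⟩
  | true :: w => ⟨Option (buildAux w).1, (buildAux w).2.hat⟩

/-- The convex linear order obtained from the one-point order `•` by successively applying,
for each letter of `w` in order, `C ↦ C ⊕ •` (letter `false`/`0`) or `C ↦ Ĉ`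
(letter `true`/`1`). -/
def build (w : List Bool) : (X : Type) × Rel2 X := buildAux w.reverse

/-! ### Auxiliary lemmas for the proof -/

section AuxLemmas

open Rel2

lemma iso_refl {X : Type} (R : Rel2 X) : R.Iso R :=
  ⟨Equiv.refl X, fun _ _ => Iff.rfl, fun _ _ => Iff.rfl⟩

lemma iso_symm {X Y : Type} {R : Rel2 X} {S : Rel2 Y} (h : R.Iso S) : S.Iso R := by
  obtain ⟨e, h1, h2⟩ := h
  refine ⟨e.symm, fun a b => ?_, fun a b => ?_⟩
  · rw [h1 (e.symm a) (e.symm b), e.apply_symm_apply, e.apply_symm_apply]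
  · rw [h2 (e.symm a) (e.symm b), e.apply_symm_apply, e.apply_symm_apply]

lemma iso_trans {X Y Z : Type} {R : Rel2 X} {S : Rel2 Y} {T : Rel2 Z}
    (h : R.Iso S) (h' : S.Iso T) : R.Iso T := by
  obtain ⟨e, h1, h2⟩ := h
  obtain ⟨f, g1, g2⟩ := h'
  exact ⟨e.trans f, fun a b => (h1 a b).trans (g1 (e a) (e b)),
    fun a b => (h2 a b).trans (g2 (e a) (e b))⟩

lemma inLast_iso {X Y : Type} {R : Rel2 X} {S : Rel2 Y} (e : X ≃ Y)
    (h1 : ∀ a b, R.r1 a b ↔ S.r1 (e a) (e b)) (h2 : ∀ a b, R.r2 a b ↔ S.r2 (e a) (e b))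
    (a : X) : R.inLast a ↔ S.inLast (e a) := by
  constructor
  · intro h b hb
    have hb' : R.r1 a (e.symm b) := by
      rw [h1 a (e.symm b), e.apply_symm_apply]; exact hb
    have := (h2 a (e.symm b)).1 (h _ hb')
    rwa [e.apply_symm_apply] at this
  · intro h b hb
    exact (h2 a b).2 (h (e b) ((h1 a b).1 hb))

lemma iso_hat {X Y : Type} {R : Rel2 X} {S : Rel2 Y} (h : R.Iso S) : R.hat.Iso S.hat := by
  obtain ⟨e, h1, h2⟩ := h
  refine ⟨e.optionCongr, ?_, ?_⟩
  · rintro (_|a) (_|b)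
    · exact Iff.rfl
    · exact Iff.rfl
    · exact Iff.rfl
    · exact h1 a b
  · rintro (_|a) (_|b)
    · exact Iff.rfl
    · exact inLast_iso e h1 h2 b
    · exact inLast_iso e h1 h2 a
    · exact h2 a b

lemma iso_oplus_point {X Y : Type} {R : Rel2 X} {S : Rel2 Y} (h : R.Iso S) :
    (R.oplus pointR).Iso (S.oplus pointR) := by
  obtain ⟨e, h1, h2⟩ := h
  refine ⟨Equiv.sumCongr e (Equiv.refl PUnit), ?_, ?_⟩
  · rintro (a|a) (b|b)
    · exact h1 a b
    · exact Iff.rfl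
    · exact Iff.rfl
    · exact Iff.rfl
  · rintro (a|a) (b|b)
    · exact h2 a b
    · exact Iff.rfl
    · exact Iff.rfl
    · exact Iff.rfl

lemma convex_point : IsConvex pointR := by
  refine ⟨⟨fun a h => h, fun a b c h _ => h.elim, fun a b hne => (hne (Subsingleton.elim a b)).elim⟩,
    ⟨fun _ => trivial, fun _ => trivial, fun _ _ => trivial⟩,
    fun _ _ _ _ _ _ => ⟨trivial, trivial⟩⟩

lemma convex_oplus_point {X : Type} {R : Rel2 X} (h : IsConvex R) :
    IsConvex (R.oplus pointR) := by
  obtain ⟨⟨hir, htr, hto⟩, ⟨hrefl, hsymm, htrans⟩, hconv⟩ := h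
  refine ⟨⟨?_, ?_, ?_⟩, ⟨?_, ?_, ?_⟩, ?_⟩
  · rintro (a|a) hh
    · exact hir a hh
    · exact hh
  · rintro (a|a) (b|b) (c|c) h1 h2 <;>
      first
        | exact False.elim h1
        | exact False.elim h2
        | trivial
        | exact htr a b c h1 h2
  · rintro (a|a) (b|b) hne
    · exact hto a b (fun hh => hne (by rw [hh]))
    · exact Or.inl trivial
    · exact Or.inr trivial
    · exact (hne (by rw [Subsingleton.elim a b])).elim
  · rintro (a|a)
    · exact hrefl a
    · trivial
  · rintro (a|a) (b|b) h1 <;> first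
        | exact False.elim h1
        | trivial
        | exact hsymm h1
  · rintro (a|a) (b|b) (c|c) h1 h2 <;>
      first
        | exact False.elim h1
        | exact False.elim h2
        | trivial
        | exact htrans h1 h2
  · rintro (a|a) (b|b) (c|c) h1 h2 h3 <;>
      first
        | exact False.elim h1
        | exact False.elim h2
        | exact False.elim h3
        | exact hconv a b c h1 h2 h3
        | exact ⟨trivial, trivial⟩

lemma convex_hat {X : Type} {R : Rel2 X} (h : IsConvex R) : IsConvex R.hat := by
  obtain ⟨⟨hir, htr, hto⟩, ⟨hrefl, hsymm, htrans⟩, hconv⟩ := h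
  refine ⟨⟨?_, ?_, ?_⟩, ⟨?_, ?_, ?_⟩, ?_⟩
  · rintro (_|a) hh
    · exact hh
    · exact hir a hh
  · rintro (_|a) (_|b) (_|c) h1 h2 <;>
      first
        | exact False.elim h1
        | exact False.elim h2
        | trivial
        | exact htr a b c h1 h2
  · rintro (_|a) (_|b) hne
    · exact (hne rfl).elim
    · exact Or.inr trivial
    · exact Or.inl trivial
    · exact hto a b (fun hh => hne (by rw [hh]))
  · rintro (_|a)
    · trivial
    · exact hrefl a
  · rintro (_|a) (_|b) h1
    · trivial
    · exact h1
    · exact h1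
    · exact hsymm h1
  · rintro (_|a) (_|b) (_|c) h1 h2
    · trivial
    · exact h2
    · trivial
    · -- h1 : R.inLast b, h2 : R.r2 b c ⊢ R.inLast c
      intro d hd
      by_cases hbd : b = d
      · exact hsymm (hbd ▸ h2)
      · rcases hto b d hbd with hh | hh
        · exact htrans (hsymm h2) (h1 d hh)
        · exact (hconv c b d (hsymm h2) hd hh).1
    · exact h1
    · -- h1 : R.inLast a, h2 : R.inLast c ⊢ R.r2 a c
      by_cases hac : a = c
      · exact hac ▸ hrefl a
      · rcases hto a c hac with hh | hh
        · exact h1 c hh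
        · exact hsymm (h2 a hh)
    · -- h1 : R.r2 a b, h2 : R.inLast b ⊢ R.inLast a
      intro d hd
      by_cases hbd : b = d
      · exact hbd ▸ h1
      · rcases hto b d hbd with hh | hh
        · exact htrans h1 (h2 d hh)
        · exact (hconv a b d h1 hd hh).1
    · exact htrans h1 h2
  · rintro (_|a) (_|b) (_|c) h1 h2 h3 <;>
      first
        | exact False.elim h1
        | exact False.elim h2
        | exact False.elim h3
        | exact hconv a b c h1 h2 h3
        | exact ⟨h1 c h2, fun d hd => htrans (hsymm (h1 c h2)) (h1 d (htr a c d h2 hd))⟩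

lemma buildAux_convex : ∀ l : List Bool, IsConvex (buildAux l).2 := by
  intro l
  induction l with
  | nil => exact convex_point
  | cons a l ih =>
    cases a
    · exact convex_oplus_point ih
    · exact convex_hat ih

lemma buildAux_finite : ∀ l : List Bool, Finite (buildAux l).1 := by
  intro l
  induction l with
  | nil => exact inferInstanceAs (Finite (PUnit : Type))
  | cons a l ih =>
    cases a
    · exact inferInstanceAs (Finite ((buildAux l).1 ⊕ (PUnit : Type)))
    · exact Finite.of_equiv _ (Equiv.optionEquivSumPUnit.{0,0} (buildAux l).1).symm

lemma card_option {α : Type} [Finite α] : Nat.card (Option α) = Nat.card α + 1 := by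
  rw [Nat.card_congr (Equiv.optionEquivSumPUnit.{0,0} α), Nat.card_sum]
  simp

lemma buildAux_card : ∀ l : List Bool, Nat.card (buildAux l).1 = l.length + 1 := by
  intro l
  induction l with
  | nil => simp [buildAux, Nat.card_eq_fintype_card]
  | cons a l ih =>
    haveI := buildAux_finite l
    cases a
    · show Nat.card ((buildAux l).1 ⊕ PUnit) = _
      rw [Nat.card_sum, ih]
      simp [Nat.card_eq_fintype_card]
    · show Nat.card (Option (buildAux l).1) = _
      rw [card_option, ih]
      simp

lemma buildAux_nonempty (l : List Bool) : Nonempty (buildAux l).1 := by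
  have h := buildAux_card l
  have hpos : 0 < Nat.card (buildAux l).1 := by omega
  exact (Nat.card_pos_iff.mp hpos).1

lemma exists_max {X : Type} [Finite X] [Nonempty X] {R : Rel2 X} (h : IsConvex R) :
    ∃ m, ∀ b, ¬ R.r1 m b := by
  obtain ⟨⟨hir, htr, hto⟩, -, -⟩ := h
  haveI : IsTrans X (fun a b => R.r1 b a) := ⟨fun a b c hab hbc => htr _ _ _ hbc hab⟩
  haveI : IsIrrefl X (fun a b => R.r1 b a) := ⟨fun a => hir a⟩
  have hwf : WellFounded (fun a b => R.r1 b a) :=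
    Finite.wellFounded_of_trans_of_irrefl _
  obtain ⟨m, -, hm⟩ := hwf.has_min Set.univ ⟨Classical.arbitrary X, trivial⟩
  exact ⟨m, fun b hb => hm b trivial hb⟩

lemma iso_max_to_max {X Y : Type} {R : Rel2 X} {S : Rel2 Y} (e : X ≃ Y)
    (h1 : ∀ a b, R.r1 a b ↔ S.r1 (e a) (e b)) {m : X} (hm : ∀ b, ¬ R.r1 m b) :
    ∀ b, ¬ S.r1 (e m) b := by
  intro b hb
  refine hm (e.symm b) ((h1 m (e.symm b)).2 ?_)
  rwa [e.apply_symm_apply]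

/-- Distinguishing predicate: there is a maximum point equivalent to another point. -/
def HasTop2 {X : Type} (R : Rel2 X) : Prop :=
  ∃ a b, a ≠ b ∧ (∀ c, ¬ R.r1 a c) ∧ R.r2 a b

lemma hasTop2_of_iso {X Y : Type} {R : Rel2 X} {S : Rel2 Y} (h : R.Iso S)
    (hT : HasTop2 R) : HasTop2 S := by
  obtain ⟨e, h1, h2⟩ := h
  obtain ⟨a, b, hne, hmax, hr2⟩ := hT
  exact ⟨e a, e b, fun hh => hne (e.injective hh), iso_max_to_max e h1 hmax, (h2 a b).1 hr2⟩

lemma hasTop2_hat {X : Type} {R : Rel2 X} {m : X} (hm : ∀ b, ¬ R.r1 m b) :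
    HasTop2 R.hat := by
  refine ⟨none, some m, by simp, ?_, ?_⟩
  · rintro (_|c) hc <;> exact hc
  · exact fun b hb => absurd hb (hm b)

lemma not_hasTop2_oplus {X : Type} {R : Rel2 X} : ¬ HasTop2 (R.oplus pointR) := by
  rintro ⟨a, b, hne, hmax, hr2⟩
  rcases a with a | a
  · exact hmax (Sum.inr PUnit.unit) trivial
  · rcases b with b | b
    · exact hr2
    · exact hne (by cases a; cases b; rfl)

lemma removeNone_spec {X Y : Type} (e : Option X ≃ Option Y) (h : e none = none) (x : X) :
    e (some x) = some (e.removeNone x) := by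
  have hex : ∃ x', e (some x) = some x' := by
    cases hx : e (some x) with
    | none => exact absurd (e.injective (hx.trans h.symm)) (by simp)
    | some y => exact ⟨y, rfl⟩
  exact (Equiv.removeNone_some e hex).symm

lemma iso_hat_cancel {X Y : Type} {R : Rel2 X} {S : Rel2 Y} (h : R.hat.Iso S.hat) :
    R.Iso S := by
  obtain ⟨e, h1, h2⟩ := h
  have hnone : e none = none := by
    have hmaxR : ∀ b, ¬ R.hat.r1 (none : Option X) b := by rintro (_|b) hb <;> exact hb
    have hmaxS := iso_max_to_max e h1 hmaxR
    cases he : e none with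
    | none => rfl
    | some y =>
      rw [he] at hmaxS
      exact absurd trivial (hmaxS none)
  have hsome : ∀ x, e (some x) = some (e.removeNone x) := removeNone_spec e hnone
  refine ⟨e.removeNone, fun a b => ?_, fun a b => ?_⟩
  · have := h1 (some a) (some b)
    rw [hsome a, hsome b] at this
    exact this
  · have := h2 (some a) (some b)
    rw [hsome a, hsome b] at this
    exact this

lemma iso_oplus_cancel {X Y : Type} {R : Rel2 X} {S : Rel2 Y}
    (h : (R.oplus pointR).Iso (S.oplus pointR)) : R.Iso S := by
  obtain ⟨e, h1, h2⟩ := h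
  have hinr : e (Sum.inr PUnit.unit) = Sum.inr PUnit.unit := by
    have hmaxR : ∀ b, ¬ (R.oplus pointR).r1 (Sum.inr PUnit.unit) b := by
      rintro (b|b) hb <;> exact hb
    have hmaxS := iso_max_to_max e h1 hmaxR
    rcases he : e (Sum.inr PUnit.unit) with y | u
    · rw [he] at hmaxS
      exact absurd trivial (hmaxS (Sum.inr PUnit.unit))
    · cases u; rfl
  have hex : ∀ x : X, ∃ y, e (Sum.inl x) = Sum.inl y := by
    intro x
    rcases he : e (Sum.inl x) with y | u
    · exact ⟨y, rfl⟩
    · cases u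
      exact absurd (e.injective (he.trans hinr.symm)) (by simp)
  choose f hf using hex
  have hex' : ∀ y : Y, ∃ x, e.symm (Sum.inl y) = Sum.inl x := by
    intro y
    rcases he : e.symm (Sum.inl y) with x | u
    · exact ⟨x, rfl⟩
    · cases u
      have : (Sum.inl y : Y ⊕ PUnit) = e (Sum.inr PUnit.unit) := by
        rw [← he, e.apply_symm_apply]
      rw [hinr] at this
      simp at this
  choose g hg using hex'
  have hgf : ∀ x, g (f x) = x := by
    intro x
    have h' : e.symm (Sum.inl (f x)) = Sum.inl x := by rw [← hf, e.symm_apply_apply]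
    exact Sum.inl.inj ((hg (f x)).symm.trans h')
  have hfg : ∀ y, f (g y) = y := by
    intro y
    have h' : e (Sum.inl (g y)) = Sum.inl y := by rw [← hg, e.apply_symm_apply]
    exact Sum.inl.inj ((hf (g y)).symm.trans h')
  refine ⟨⟨f, g, hgf, hfg⟩, fun a b => ?_, fun a b => ?_⟩
  · have := h1 (Sum.inl a) (Sum.inl b)
    rw [hf a, hf b] at this
    exact this
  · have := h2 (Sum.inl a) (Sum.inl b)
    rw [hf a, hf b] at this
    exact this

lemma buildAux_inj : ∀ l l' : List Bool, l.length = l'.length →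
    Rel2.Iso (buildAux l).2 (buildAux l').2 → l = l' := by
  intro l
  induction l with
  | nil =>
    rintro (_ | ⟨b, l'⟩) hlen _
    · rfl
    · simp at hlen
  | cons a l ih =>
    rintro (_ | ⟨b, l'⟩) hlen hiso
    · simp at hlen
    · have hlen' : l.length = l'.length := by simpa using hlen
      have hT : ∀ w : List Bool, HasTop2 (buildAux (true :: w)).2 := by
        intro w
        haveI := buildAux_finite w
        haveI := buildAux_nonempty w
        obtain ⟨m, hm⟩ := exists_max (buildAux_convex w)
        exact hasTop2_hat hm
      have hab : a = b := by
        cases a <;> cases b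
        · rfl
        · exact absurd (hasTop2_of_iso (iso_symm hiso) (hT l')) not_hasTop2_oplus
        · exact absurd (hasTop2_of_iso hiso (hT l)) not_hasTop2_oplus
        · rfl
      subst hab
      cases a
      · exact congrArg (List.cons false) (ih l' hlen' (iso_oplus_cancel hiso))
      · exact congrArg (List.cons true) (ih l' hlen' (iso_hat_cancel hiso))

lemma surjAux : ∀ (n : ℕ) (X : Type), Finite X → Nat.card X = n + 1 →
    ∀ R : Rel2 X, IsConvex R →
    ∃ l : List Bool, l.length = n ∧ Rel2.Iso (buildAux l).2 R := by
  intro n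
  induction n with
  | zero =>
    intro X _ hcard R hR
    obtain ⟨x, hx⟩ := Nat.card_eq_one_iff_exists.mp hcard
    refine ⟨[], rfl, ⟨fun _ => x, fun _ => PUnit.unit, fun _ => rfl, fun y => (hx y).symm⟩,
      fun a b => ?_, fun a b => ?_⟩
    · exact ⟨fun h => h.elim, fun h => (hR.1.1 x h).elim⟩
    · exact ⟨fun _ => hR.2.1.refl x, fun _ => trivial⟩
  | succ n ih =>
    intro X _ hcard R hR
    classical
    haveI : Nonempty X := by
      have hpos : 0 < Nat.card X := by omega
      exact (Nat.card_pos_iff.mp hpos).1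
    obtain ⟨m, hm⟩ := exists_max hR
    set Y := {x : X // x ≠ m} with hY
    let R' : Rel2 Y := ⟨fun a b => R.r1 a.1 b.1, fun a b => R.r2 a.1 b.1⟩
    have hR' : IsConvex R' := by
      obtain ⟨⟨hir, htr, hto⟩, ⟨hrf, hsy, htn⟩, hcv⟩ := hR
      exact ⟨⟨fun a => hir a.1, fun a b c => htr a.1 b.1 c.1,
          fun a b hne => hto a.1 b.1 (fun hh => hne (Subtype.ext hh))⟩,
        ⟨fun a => hrf a.1, fun h => hsy h, fun h h' => htn h h'⟩,
        fun a b c h1 h2 h3 => hcv a.1 b.1 c.1 h1 h2 h3⟩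
    have hcardY : Nat.card Y = n + 1 := by
      have hc : Nat.card (Option Y) = Nat.card X := Nat.card_congr (Equiv.optionSubtypeNe m)
      rw [card_option] at hc
      omega
    obtain ⟨l, hl, hiso'⟩ := ih Y inferInstance hcardY R' hR'
    have hxm : ∀ x : Y, R.r1 x.1 m := by
      intro x
      rcases hR.1.2.2 x.1 m x.2 with h | h
      · exact h
      · exact absurd h (hm _)
    by_cases hc : ∃ y : Y, R.r2 y.1 m
    · obtain ⟨y0, hy0⟩ := hc
      have key : ∀ a : Y, R'.inLast a ↔ R.r2 a.1 m := by
        intro a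
        constructor
        · intro hL
          by_cases hay : a.1 = y0.1
          · rw [hay]; exact hy0
          · rcases hR.1.2.2 a.1 y0.1 hay with h | h
            · exact hR.2.1.trans (hL y0 h) hy0
            · exact (hR.2.2 y0.1 m a.1 hy0 h (hxm a)).2
        · intro h2m b hb
          exact (hR.2.2 a.1 m b.1 h2m hb (hxm b)).1
      let e2 : Option Y ≃ X := Equiv.optionSubtypeNe m
      have e2none : e2 none = m := Equiv.optionSubtypeNe_none m
      have e2some : ∀ a : Y, e2 (some a) = a.1 := fun a => Equiv.optionSubtypeNe_some m a
      have isoHat : Rel2.Iso R'.hat R := by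
        refine ⟨e2, ?_, ?_⟩
        · rintro (_|a) (_|b)
          · rw [e2none]; exact iff_of_false (fun h => h) (hR.1.1 m)
          · rw [e2none, e2some]; exact iff_of_false (fun h => h) (hm b.1)
          · rw [e2none, e2some]; exact iff_of_true trivial (hxm a)
          · rw [e2some, e2some]; exact Iff.rfl
        · rintro (_|a) (_|b)
          · rw [e2none]; exact iff_of_true trivial (hR.2.1.refl m)
          · rw [e2none, e2some]
            exact (key b).trans ⟨fun h => hR.2.1.symm h, fun h => hR.2.1.symm h⟩
          · rw [e2none, e2some]; exact key a
          · rw [e2some, e2some]; exact Iff.rfl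
      exact ⟨true :: l, by simpa using hl, iso_trans (iso_hat hiso') isoHat⟩
    · push_neg at hc
      let e2 : Y ⊕ PUnit ≃ X :=
        { toFun := fun a => Sum.elim (fun y : Y => y.1) (fun _ => m) a
          invFun := fun x => if h : x = m then Sum.inr PUnit.unit else Sum.inl ⟨x, h⟩
          left_inv := by
            rintro (a|u)
            · exact dif_neg a.2
            · cases u; exact dif_pos rfl
          right_inv := by
            intro x
            show Sum.elim (fun y : Y => y.1) (fun _ => m)
              (if h : x = m then Sum.inr PUnit.unit else Sum.inl ⟨x, h⟩) = x
            by_cases h : x = m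
            · rw [dif_pos h]; exact h.symm
            · rw [dif_neg h]; rfl }
      have isoOp : Rel2.Iso (R'.oplus pointR) R := by
        refine ⟨e2, ?_, ?_⟩
        · rintro (a|a) (b|b)
          · exact Iff.rfl
          · exact iff_of_true trivial (hxm a)
          · exact iff_of_false (fun h => h) (hm b.1)
          · exact iff_of_false (fun h => h) (hR.1.1 m)
        · rintro (a|a) (b|b)
          · exact Iff.rfl
          · exact iff_of_false (fun h => h) (fun h => hc a h)
          · exact iff_of_false (fun h => h) (fun h => hc b (hR.2.1.symm h))
          · exact iff_of_true trivial (hR.2.1.refl m)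
      exact ⟨false :: l, by simpa using hl, iso_trans (iso_oplus_point hiso') isoOp⟩

end AuxLemmas
/-- **Words of length `n-1` biject with isomorphism classes of convex linear orders on `n`
points.** The map sending a word `w ∈ {0,1}^{n-1}` to the isomorphism class of the convex
linear order built from `•` by applying the operations coded by the letters of `w` in order
is a bijection onto the set of isomorphism classes of convex linear orders with `n` points:
it lands in that set, it is injective on isomorphism classes, and every convex linear order
with `n` points is obtained. -/
theorem build_bijection (n : ℕ) (hn : 1 ≤ n) :
    (∀ w : List Bool, w.length = n - 1 →
      IsConvex (build w).2 ∧ Nat.card (build w).1 = n) ∧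
    (∀ w w' : List Bool, w.length = n - 1 → w'.length = n - 1 →
      Rel2.Iso (build w).2 (build w').2 → w = w') ∧
    (∀ R : Rel2 (Fin n), IsConvex R →
      ∃ w : List Bool, w.length = n - 1 ∧ Rel2.Iso (build w).2 R) := by
  refine ⟨?_, ?_, ?_⟩
  · intro w hw
    refine ⟨buildAux_convex _, ?_⟩
    show Nat.card (buildAux w.reverse).1 = n
    rw [buildAux_card, List.length_reverse, hw]
    omega
  · intro w w' hw hw' hiso
    have h := buildAux_inj w.reverse w'.reverse (by simp [hw, hw']) hiso
    have h2 := congrArg List.reverse h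
    simpa using h2
  · intro R hR
    obtain ⟨l, hl, hiso⟩ := surjAux (n - 1) (Fin n) inferInstance
      (by rw [Nat.card_eq_fintype_card, Fintype.card_fin]; omega) R hR
    refine ⟨l.reverse, by simp [hl], ?_⟩
    show Rel2.Iso (buildAux l.reverse.reverse).2 R
    rw [List.reverse_reverse]
    exact hiso
end

section
/- Let M and N be finite convex linear orders and k a natural number. If M ≡_k N, then M̂ ≡_k N̂. -/
open FirstOrder Language Filter

namespace HatEF
open FirstOrder Language BoundedFormula

variable {X Y : Type}

/-- Atomic agreement of two tuples, including extra unary predicates `p`, `q`. -/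
def Atom (R : Rel2 X) (S : Rel2 Y) (p : X → Prop) (q : Y → Prop) {n : ℕ}
    (a : Fin n → X) (b : Fin n → Y) : Prop :=
  (∀ i j : Fin n, (a i = a j ↔ b i = b j) ∧ (R.r1 (a i) (a j) ↔ S.r1 (b i) (b j)) ∧
      (R.r2 (a i) (a j) ↔ S.r2 (b i) (b j))) ∧
  ∀ i : Fin n, p (a i) ↔ q (b i)

/-- `k`-round EF equivalence of tuples. -/
def EF (R : Rel2 X) (S : Rel2 Y) (p : X → Prop) (q : Y → Prop) :
    (k : ℕ) → {n : ℕ} → (Fin n → X) → (Fin n → Y) → Prop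
  | 0, _, a, b => Atom R S p q a b
  | (k+1), _, a, b => Atom R S p q a b ∧
      (∀ x : X, ∃ y : Y, EF R S p q k (Fin.snoc a x) (Fin.snoc b y)) ∧
      (∀ y : Y, ∃ x : X, EF R S p q k (Fin.snoc a x) (Fin.snoc b y))

theorem EF_atom {R : Rel2 X} {S : Rel2 Y} {p q} {k : ℕ} {n : ℕ} {a : Fin n → X} {b : Fin n → Y}
    (h : EF R S p q k a b) : Atom R S p q a b := by
  cases k with
  | zero => exact h
  | succ k => exact h.1

theorem EF_mono {R : Rel2 X} {S : Rel2 Y} {p q} :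
    ∀ {k : ℕ} {n : ℕ} {a : Fin n → X} {b : Fin n → Y},
      EF R S p q (k+1) a b → EF R S p q k a b := by
  intro k
  induction k with
  | zero => intro n a b h; exact h.1
  | succ k ih =>
    intro n a b h
    exact ⟨h.1, fun x => (h.2.1 x).imp (fun y hy => ih hy),
      fun y => (h.2.2 y).imp (fun x hx => ih hx)⟩

theorem EF_le {R : Rel2 X} {S : Rel2 Y} {p q} {j k : ℕ} (hjk : j ≤ k) :
    ∀ {n : ℕ} {a : Fin n → X} {b : Fin n → Y}, EF R S p q k a b → EF R S p q j a b := by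
  induction hjk with
  | refl => exact fun h => h
  | step _ ih => exact fun h => ih (EF_mono h)

theorem EF_refl (R : Rel2 X) (p : X → Prop) :
    ∀ (k : ℕ) {n : ℕ} (a : Fin n → X), EF R R p p k a a := by
  intro k
  induction k with
  | zero => intro n a; exact ⟨fun i j => ⟨Iff.rfl, Iff.rfl, Iff.rfl⟩, fun i => Iff.rfl⟩
  | succ k ih =>
    intro n a
    exact ⟨⟨fun i j => ⟨Iff.rfl, Iff.rfl, Iff.rfl⟩, fun i => Iff.rfl⟩,
      fun x => ⟨x, ih _⟩, fun y => ⟨y, ih _⟩⟩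

/-- One spare round transfers `inLast`-agreement. -/
theorem EF_one_inLast {R : Rel2 X} {S : Rel2 Y} {n : ℕ} {a : Fin n → X} {b : Fin n → Y}
    (h : EF R S (fun _ => True) (fun _ => True) 1 a b) (i : Fin n) :
    (R.inLast (a i) ↔ S.inLast (b i)) := by
  constructor
  · intro hl d hd
    obtain ⟨c, hc⟩ := h.2.2 d
    have hA := hc.1 i.castSucc (Fin.last n)
    simp only [Fin.snoc_castSucc, Fin.snoc_last] at hA
    exact hA.2.2.mp (hl c (hA.2.1.mpr hd))
  · intro hl c hc
    obtain ⟨d, hd⟩ := h.2.1 c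
    have hA := hd.1 i.castSucc (Fin.last n)
    simp only [Fin.snoc_castSucc, Fin.snoc_last] at hA
    exact hA.2.2.mpr (hl d (hA.2.1.mp hc))

/-- One extra round upgrades trivial-predicate EF to inLast-predicate EF. -/
theorem EF_boost {R : Rel2 X} {S : Rel2 Y} :
    ∀ {k : ℕ} {n : ℕ} {a : Fin n → X} {b : Fin n → Y},
      EF R S (fun _ => True) (fun _ => True) (k+1) a b →
      EF R S R.inLast S.inLast k a b := by
  intro k
  induction k with
  | zero =>
    intro n a b h
    exact ⟨(EF_atom h).1, EF_one_inLast h⟩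
  | succ k ih =>
    intro n a b h
    refine ⟨⟨(EF_atom h).1, EF_one_inLast (EF_le (by omega) h)⟩, ?_, ?_⟩
    · intro x
      obtain ⟨y, hy⟩ := h.2.1 x
      exact ⟨y, ih hy⟩
    · intro y
      obtain ⟨x, hx⟩ := h.2.2 y
      exact ⟨x, ih hx⟩


variable {M : Rel2 X} {N : Rel2 Y}

theorem map_snoc_none {m n : ℕ} (e : Fin n → Option (Fin m)) (a : Fin m → X) :
    (fun i : Fin (n+1) => Option.map a ((Fin.snoc e none : Fin (n+1) → Option (Fin m)) i)) =
      (Fin.snoc (fun i => Option.map a (e i)) none : Fin (n+1) → Option X) := by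
  funext i
  refine Fin.lastCases ?_ (fun j => ?_) i <;> simp

theorem map_snoc_some {m n : ℕ} (e : Fin n → Option (Fin m)) (a : Fin m → X) (x : X) :
    (fun i : Fin (n+1) => Option.map ((Fin.snoc a x : Fin (m+1) → X))
        ((Fin.snoc (fun i => Option.map Fin.castSucc (e i)) (some (Fin.last m)) : Fin (n+1) → Option (Fin (m+1))) i)) =
      (Fin.snoc (fun i => Option.map a (e i)) (some x) : Fin (n+1) → Option X) := by
  funext i
  refine Fin.lastCases ?_ (fun j => ?_) i <;> simp [Option.map_map, Function.comp]

theorem some_snoc {n : ℕ} (a : Fin n → X) (x : X) :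
    (fun i : Fin (n+1) => some ((Fin.snoc a x : Fin (n+1) → X) i)) =
      (Fin.snoc (fun i => some (a i)) (some x) : Fin (n+1) → Option X) := by
  funext i
  refine Fin.lastCases ?_ (fun j => ?_) i <;> simp

theorem map_snoc_id {n : ℕ} (a : Fin n → X) :
    (fun i : Fin (n+1) => Option.map a ((Fin.snoc (fun i : Fin n => some i) none : Fin (n+1) → Option (Fin n)) i)) =
      (Fin.snoc (fun i => some (a i)) none : Fin (n+1) → Option X) := by
  funext i
  refine Fin.lastCases ?_ (fun j => ?_) i <;> simp

theorem hat_atom {m n : ℕ} (e : Fin n → Option (Fin m)) {a : Fin m → X} {b : Fin m → Y}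
    (h : Atom M N M.inLast N.inLast a b) :
    Atom M.hat N.hat (fun _ => True) (fun _ => True)
      (fun i => (e i).map a) (fun i => (e i).map b) := by
  refine ⟨fun i j => ?_, fun i => Iff.rfl⟩
  rcases hei : e i with _ | i' <;> rcases hej : e j with _ | j' <;>
    simp only [hei, hej, Option.map_none, Option.map_some, Rel2.hat]
  case none.none => exact ⟨trivial, trivial, trivial⟩
  case none.some => exact ⟨by simp, trivial, h.2 j'⟩
  case some.none => exact ⟨by simp, trivial, h.2 i'⟩
  case some.some =>
    exact ⟨by simpa using (h.1 i' j').1, (h.1 i' j').2.1, (h.1 i' j').2.2⟩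

theorem hat_of_plus :
    ∀ (k : ℕ) {m n : ℕ} (e : Fin n → Option (Fin m)) {a : Fin m → X} {b : Fin m → Y},
      EF M N M.inLast N.inLast k a b →
      EF M.hat N.hat (fun _ => True) (fun _ => True) k
        (fun i => (e i).map a) (fun i => (e i).map b) := by
  intro k
  induction k with
  | zero => intro m n e a b h; exact hat_atom e h
  | succ k ih =>
    intro m n e a b h
    refine ⟨hat_atom e (EF_atom h), ?_, ?_⟩
    · rintro (_ | x)
      · refine ⟨none, ?_⟩
        rw [← map_snoc_none e a, ← map_snoc_none e b]
        exact ih (Fin.snoc e none) (EF_mono h)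
      · obtain ⟨y, hy⟩ := h.2.1 x
        refine ⟨some y, ?_⟩
        rw [← map_snoc_some e a x, ← map_snoc_some e b y]
        exact ih (Fin.snoc (fun i => Option.map Fin.castSucc (e i)) (some (Fin.last m))) hy
    · rintro (_ | y)
      · refine ⟨none, ?_⟩
        rw [← map_snoc_none e a, ← map_snoc_none e b]
        exact ih (Fin.snoc e none) (EF_mono h)
      · obtain ⟨x, hx⟩ := h.2.2 y
        refine ⟨some x, ?_⟩
        rw [← map_snoc_some e a x, ← map_snoc_some e b y]
        exact ih (Fin.snoc (fun i => Option.map Fin.castSucc (e i)) (some (Fin.last m))) hx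

theorem hat_of_triv :
    ∀ (k : ℕ) {n : ℕ} {a : Fin n → X} {b : Fin n → Y},
      EF M N (fun _ => True) (fun _ => True) k a b →
      EF M.hat N.hat (fun _ => True) (fun _ => True) k
        (fun i => some (a i)) (fun i => some (b i)) := by
  intro k
  induction k with
  | zero =>
    intro n a b h
    refine ⟨fun i j => ?_, fun i => Iff.rfl⟩
    have := h.1 i j
    exact ⟨by simpa using this.1, this.2.1, this.2.2⟩
  | succ k ih =>
    intro n a b h
    refine ⟨?_, ?_, ?_⟩
    · refine ⟨fun i j => ?_, fun i => Iff.rfl⟩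
      have := (EF_atom h).1 i j
      exact ⟨by simpa using this.1, this.2.1, this.2.2⟩
    · rintro (_ | x)
      · refine ⟨none, ?_⟩
        rw [← map_snoc_id a, ← map_snoc_id b]
        exact hat_of_plus k (Fin.snoc (fun i : Fin n => some i) none) (EF_boost h)
      · obtain ⟨y, hy⟩ := h.2.1 x
        refine ⟨some y, ?_⟩
        rw [← some_snoc a x, ← some_snoc b y]
        exact ih hy
    · rintro (_ | y)
      · refine ⟨none, ?_⟩
        rw [← map_snoc_id a, ← map_snoc_id b]
        exact hat_of_plus k (Fin.snoc (fun i : Fin n => some i) none) (EF_boost h)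
      · obtain ⟨x, hx⟩ := h.2.2 y
        refine ⟨some x, ?_⟩
        rw [← some_snoc a x, ← some_snoc b y]
        exact ih hx


/-! ### Formulas -/

/-- Realization with the canonical empty valuation. -/
def Rlz (R : Rel2 X) {n : ℕ} (φ : L2.BoundedFormula Empty n) (xs : Fin n → X) : Prop :=
  @FirstOrder.Language.BoundedFormula.Realize L2 X R.str Empty n φ (fun e => e.elim) xs

def land {n : ℕ} (f g : L2.BoundedFormula Empty n) : L2.BoundedFormula Empty n :=
  ((f.imp g.not).not)

def lorr {n : ℕ} (f g : L2.BoundedFormula Empty n) : L2.BoundedFormula Empty n :=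
  (f.not.imp g)

def lex {n : ℕ} (f : L2.BoundedFormula Empty (n+1)) : L2.BoundedFormula Empty n :=
  (f.not.all.not)

def conj {n : ℕ} : List (L2.BoundedFormula Empty n) → L2.BoundedFormula Empty n
  | [] => BoundedFormula.falsum.not
  | φ :: l => land φ (conj l)

def disj {n : ℕ} : List (L2.BoundedFormula Empty n) → L2.BoundedFormula Empty n
  | [] => BoundedFormula.falsum
  | φ :: l => lorr φ (disj l)

open FirstOrder.Language.BoundedFormula in
theorem qd_not {n : ℕ} (f : L2.BoundedFormula Empty n) : qdepth f.not = qdepth f := by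
  simp [BoundedFormula.not, qdepth]

open FirstOrder.Language.BoundedFormula in
theorem qd_land {n : ℕ} (f g : L2.BoundedFormula Empty n) :
    qdepth (land f g) = max (qdepth f) (qdepth g) := by
  simp [land, qdepth, qd_not]

open FirstOrder.Language.BoundedFormula in
theorem qd_lorr {n : ℕ} (f g : L2.BoundedFormula Empty n) :
    qdepth (lorr f g) = max (qdepth f) (qdepth g) := by
  simp [lorr, qdepth, qd_not]

open FirstOrder.Language.BoundedFormula in
theorem qd_lex {n : ℕ} (f : L2.BoundedFormula Empty (n+1)) :
    qdepth (lex f) = qdepth f + 1 := by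
  simp [lex, qdepth, qd_not]

open FirstOrder.Language.BoundedFormula in
theorem qd_conj {n : ℕ} (l : List (L2.BoundedFormula Empty n)) (k : ℕ)
    (h : ∀ φ ∈ l, qdepth φ ≤ k) : qdepth (conj l) ≤ k := by
  induction l with
  | nil => simp [conj, qd_not, qdepth]
  | cons φ l ih =>
    simp only [conj, qd_land, max_le_iff]
    exact ⟨h φ (by simp), ih fun ψ hψ => h ψ (by simp [hψ])⟩

open FirstOrder.Language.BoundedFormula in
theorem qd_disj {n : ℕ} (l : List (L2.BoundedFormula Empty n)) (k : ℕ)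
    (h : ∀ φ ∈ l, qdepth φ ≤ k) : qdepth (disj l) ≤ k := by
  induction l with
  | nil => simp [disj, qdepth]
  | cons φ l ih =>
    simp only [disj, qd_lorr, max_le_iff]
    exact ⟨h φ (by simp), ih fun ψ hψ => h ψ (by simp [hψ])⟩

theorem Rlz_not {R : Rel2 X} {n : ℕ} {f : L2.BoundedFormula Empty n} {xs : Fin n → X} :
    Rlz R f.not xs ↔ ¬ Rlz R f xs := Iff.rfl

theorem Rlz_imp {R : Rel2 X} {n : ℕ} {f g : L2.BoundedFormula Empty n} {xs : Fin n → X} :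
    Rlz R (f.imp g) xs ↔ (Rlz R f xs → Rlz R g xs) := Iff.rfl

theorem Rlz_falsum {R : Rel2 X} {n : ℕ} {xs : Fin n → X} :
    Rlz R BoundedFormula.falsum xs ↔ False := Iff.rfl

theorem Rlz_all {R : Rel2 X} {n : ℕ} {f : L2.BoundedFormula Empty (n+1)} {xs : Fin n → X} :
    Rlz R f.all xs ↔ ∀ x, Rlz R f (Fin.snoc xs x) := Iff.rfl

theorem Rlz_land {R : Rel2 X} {n : ℕ} {f g : L2.BoundedFormula Empty n} {xs : Fin n → X} :
    Rlz R (land f g) xs ↔ Rlz R f xs ∧ Rlz R g xs := by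
  have : Rlz R (land f g) xs ↔ ¬ (Rlz R f xs → ¬ Rlz R g xs) := Iff.rfl
  rw [this]; tauto

theorem Rlz_lorr {R : Rel2 X} {n : ℕ} {f g : L2.BoundedFormula Empty n} {xs : Fin n → X} :
    Rlz R (lorr f g) xs ↔ Rlz R f xs ∨ Rlz R g xs := by
  have : Rlz R (lorr f g) xs ↔ (¬ Rlz R f xs → Rlz R g xs) := Iff.rfl
  rw [this]; tauto

theorem Rlz_lex {R : Rel2 X} {n : ℕ} {f : L2.BoundedFormula Empty (n+1)} {xs : Fin n → X} :
    Rlz R (lex f) xs ↔ ∃ x, Rlz R f (Fin.snoc xs x) := by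
  have : Rlz R (lex f) xs ↔ ¬ ∀ x, ¬ Rlz R f (Fin.snoc xs x) := Iff.rfl
  rw [this]; push_neg; rfl

theorem Rlz_conj {R : Rel2 X} {n : ℕ} {l : List (L2.BoundedFormula Empty n)} {xs : Fin n → X} :
    Rlz R (conj l) xs ↔ ∀ φ ∈ l, Rlz R φ xs := by
  induction l with
  | nil => exact iff_of_true (fun h => h) (by simp)
  | cons φ l ih => simp [conj, Rlz_land, ih]

theorem Rlz_disj {R : Rel2 X} {n : ℕ} {l : List (L2.BoundedFormula Empty n)} {xs : Fin n → X} :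
    Rlz R (disj l) xs ↔ ∃ φ ∈ l, Rlz R φ xs := by
  induction l with
  | nil => simp [disj, Rlz_falsum]
  | cons φ l ih => simp [disj, Rlz_lorr, ih]

/-- Atomic formulas. -/
def tv {n : ℕ} (i : Fin n) : L2.Term (Empty ⊕ Fin n) := Term.var (Sum.inr i)

def feq {n : ℕ} (i j : Fin n) : L2.BoundedFormula Empty n :=
  BoundedFormula.equal (tv i) (tv j)

def fr1 {n : ℕ} (i j : Fin n) : L2.BoundedFormula Empty n :=
  BoundedFormula.rel TwoRelSym.s1 ![tv i, tv j]

def fr2 {n : ℕ} (i j : Fin n) : L2.BoundedFormula Empty n :=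
  BoundedFormula.rel TwoRelSym.s2 ![tv i, tv j]

theorem Rlz_feq {R : Rel2 X} {n : ℕ} {i j : Fin n} {xs : Fin n → X} :
    Rlz R (feq i j) xs ↔ xs i = xs j := Iff.rfl

theorem Rlz_fr1 {R : Rel2 X} {n : ℕ} {i j : Fin n} {xs : Fin n → X} :
    Rlz R (fr1 i j) xs ↔ R.r1 (xs i) (xs j) := Iff.rfl

theorem Rlz_fr2 {R : Rel2 X} {n : ℕ} {i j : Fin n} {xs : Fin n → X} :
    Rlz R (fr2 i j) xs ↔ R.r2 (xs i) (xs j) := Iff.rfl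

open FirstOrder.Language.BoundedFormula in
theorem qd_feq {n : ℕ} (i j : Fin n) : qdepth (feq i j) = 0 := rfl
open FirstOrder.Language.BoundedFormula in
theorem qd_fr1 {n : ℕ} (i j : Fin n) : qdepth (fr1 i j) = 0 := rfl
open FirstOrder.Language.BoundedFormula in
theorem qd_fr2 {n : ℕ} (i j : Fin n) : qdepth (fr2 i j) = 0 := rfl

open Classical in
noncomputable def litIf {n : ℕ} (c : Prop) (φ : L2.BoundedFormula Empty n) :
    L2.BoundedFormula Empty n :=
  if c then φ else φ.not

theorem Rlz_litIf {R : Rel2 X} {n : ℕ} {c : Prop} {φ : L2.BoundedFormula Empty n}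
    {xs : Fin n → X} : Rlz R (litIf c φ) xs ↔ (c ↔ Rlz R φ xs) := by
  by_cases h : c <;> simp [litIf, h, Rlz_not]

open FirstOrder.Language.BoundedFormula in
theorem qd_litIf {n : ℕ} (c : Prop) (φ : L2.BoundedFormula Empty n) :
    qdepth (litIf c φ) = qdepth φ := by
  by_cases h : c <;> simp [litIf, h, qd_not]

/-- The atomic (quantifier-free) description of a tuple. -/
noncomputable def atomBF (R : Rel2 X) (n : ℕ) (a : Fin n → X) : L2.BoundedFormula Empty n :=
  conj ((List.finRange n).map fun i => conj ((List.finRange n).map fun j =>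
    land (litIf (a i = a j) (feq i j))
      (land (litIf (R.r1 (a i) (a j)) (fr1 i j)) (litIf (R.r2 (a i) (a j)) (fr2 i j)))))

open FirstOrder.Language.BoundedFormula in
theorem qd_atomBF (R : Rel2 X) (n : ℕ) (a : Fin n → X) : qdepth (atomBF R n a) ≤ 0 := by
  refine qd_conj _ 0 ?_
  simp only [List.mem_map]
  rintro φ ⟨i, -, rfl⟩
  refine qd_conj _ 0 ?_
  simp only [List.mem_map]
  rintro φ ⟨j, -, rfl⟩
  simp [qd_land, qd_litIf, qd_feq, qd_fr1, qd_fr2]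

theorem Rlz_atomBF {R : Rel2 X} {S : Rel2 Y} {n : ℕ} {a : Fin n → X} {b : Fin n → Y} :
    Rlz S (atomBF R n a) b ↔ Atom R S (fun _ => True) (fun _ => True) a b := by
  constructor
  · intro h
    refine ⟨fun i j => ?_, fun i => Iff.rfl⟩
    rw [atomBF, Rlz_conj] at h
    have h2 := h _ (List.mem_map_of_mem (List.mem_finRange i))
    rw [Rlz_conj] at h2
    have h3 := h2 _ (List.mem_map_of_mem (List.mem_finRange j))
    rw [Rlz_land, Rlz_land, Rlz_litIf, Rlz_litIf, Rlz_litIf, Rlz_feq, Rlz_fr1, Rlz_fr2] at h3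
    exact h3
  · intro h
    rw [atomBF, Rlz_conj]
    simp only [List.mem_map]
    rintro φ ⟨i, -, rfl⟩
    rw [Rlz_conj]
    simp only [List.mem_map]
    rintro φ ⟨j, -, rfl⟩
    rw [Rlz_land, Rlz_land, Rlz_litIf, Rlz_litIf, Rlz_litIf, Rlz_feq, Rlz_fr1, Rlz_fr2]
    exact (h.1 i j)

/-- The depth-`k` Hintikka formula of a tuple in a finite structure. -/
noncomputable def hin (R : Rel2 X) [Fintype X] : (k n : ℕ) → (Fin n → X) → L2.BoundedFormula Empty n
  | 0, n, a => atomBF R n a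
  | (k+1), n, a =>
    land (atomBF R n a) (land
      (conj ((Finset.univ.toList (α := X)).map fun c => lex (hin R k (n+1) (Fin.snoc a c))))
      ((disj ((Finset.univ.toList (α := X)).map fun c => hin R k (n+1) (Fin.snoc a c))).all))

open FirstOrder.Language.BoundedFormula in
theorem qd_hin (R : Rel2 X) [Fintype X] :
    ∀ (k : ℕ) {n : ℕ} (a : Fin n → X), qdepth (hin R k n a) ≤ k := by
  intro k
  induction k with
  | zero => intro n a; exact qd_atomBF R n a
  | succ k ih =>
    intro n a
    rw [hin, qd_land, qd_land]
    refine max_le (le_trans (qd_atomBF R n a) (by omega)) (max_le ?_ ?_)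
    · refine le_trans (qd_conj _ (k+1) ?_) le_rfl
      simp only [List.mem_map]
      rintro φ ⟨c, -, rfl⟩
      rw [qd_lex]
      exact Nat.succ_le_succ (ih _)
    · set L := (Finset.univ.toList (α := X)).map fun c => hin R k (n+1) (Fin.snoc a c) with hL
      have h1 : qdepth (disj L) ≤ k := by
        refine qd_disj _ k ?_
        simp only [hL, List.mem_map]
        rintro φ ⟨c, -, rfl⟩
        exact ih _
      have h2 : qdepth (BoundedFormula.all (disj L)) = qdepth (disj L) + 1 := rfl
      rw [h2]
      omega

theorem Rlz_hin (R : Rel2 X) [Fintype X] (S : Rel2 Y) :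
    ∀ (k : ℕ) {n : ℕ} (a : Fin n → X) (b : Fin n → Y),
      Rlz S (hin R k n a) b ↔ EF R S (fun _ => True) (fun _ => True) k a b := by
  intro k
  induction k with
  | zero => intro n a b; exact Rlz_atomBF
  | succ k ih =>
    intro n a b
    rw [hin, Rlz_land, Rlz_land, Rlz_atomBF]
    show _ ↔ (Atom R S _ _ a b ∧ _ ∧ _)
    refine and_congr Iff.rfl (and_congr ?_ ?_)
    · rw [Rlz_conj]
      simp only [List.mem_map]
      constructor
      · intro h x
        have := h _ ⟨x, Finset.mem_toList.mpr (Finset.mem_univ x), rfl⟩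
        rw [Rlz_lex] at this
        obtain ⟨y, hy⟩ := this
        exact ⟨y, (ih _ _).mp hy⟩
      · rintro h φ ⟨c, -, rfl⟩
        rw [Rlz_lex]
        obtain ⟨y, hy⟩ := h c
        exact ⟨y, (ih _ _).mpr hy⟩
    · rw [Rlz_all]
      refine forall_congr' fun y => ?_
      rw [Rlz_disj]
      simp only [List.mem_map]
      constructor
      · rintro ⟨φ, ⟨c, -, rfl⟩, hφ⟩
        exact ⟨c, (ih _ _).mp hφ⟩
      · rintro ⟨c, hc⟩
        exact ⟨_, ⟨c, Finset.mem_toList.mpr (Finset.mem_univ c), rfl⟩, (ih _ _).mpr hc⟩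

theorem term_var {n : ℕ} : ∀ (t : L2.Term (Empty ⊕ Fin n)), ∃ i : Fin n, t = Term.var (Sum.inr i) := by
  intro t
  cases t with
  | var x =>
    cases x with
    | inl e => exact e.elim
    | inr i => exact ⟨i, rfl⟩
  | func f ts => exact f.elim

def teval (R : Rel2 X) {n : ℕ} (xs : Fin n → X) (t : L2.Term (Empty ⊕ Fin n)) : X :=
  @FirstOrder.Language.Term.realize L2 X R.str _ (Sum.elim (fun e : Empty => e.elim) xs) t

theorem teval_var (R : Rel2 X) {n : ℕ} (xs : Fin n → X) (i : Fin n) :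
    teval R xs (Term.var (Sum.inr i)) = xs i := rfl

open FirstOrder.Language.BoundedFormula in
theorem EF_transfer {R : Rel2 X} {S : Rel2 Y} :
    ∀ {n : ℕ} (φ : L2.BoundedFormula Empty n) (k : ℕ), qdepth φ ≤ k →
      ∀ {a : Fin n → X} {b : Fin n → Y},
        EF R S (fun _ => True) (fun _ => True) k a b → (Rlz R φ a ↔ Rlz S φ b) := by
  intro n φ
  induction φ with
  | falsum => intro k _ a b _; exact Iff.rfl
  | equal t₁ t₂ =>
    intro k _ a b hEF
    obtain ⟨i, rfl⟩ := term_var t₁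
    obtain ⟨j, rfl⟩ := term_var t₂
    exact ((EF_atom hEF).1 i j).1
  | @rel n l r ts =>
    intro k _ a b hEF
    cases r with
    | s1 =>
      obtain ⟨i, hi⟩ := term_var (ts 0)
      obtain ⟨j, hj⟩ := term_var (ts 1)
      have ha : Rlz R (BoundedFormula.rel TwoRelSym.s1 ts) a ↔ R.r1 (a i) (a j) := by
        have : Rlz R (BoundedFormula.rel TwoRelSym.s1 ts) a ↔
            R.r1 (teval R a (ts 0)) (teval R a (ts 1)) := Iff.rfl
        rw [this, hi, hj, teval_var, teval_var]
      have hb : Rlz S (BoundedFormula.rel TwoRelSym.s1 ts) b ↔ S.r1 (b i) (b j) := by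
        have : Rlz S (BoundedFormula.rel TwoRelSym.s1 ts) b ↔
            S.r1 (teval S b (ts 0)) (teval S b (ts 1)) := Iff.rfl
        rw [this, hi, hj, teval_var, teval_var]
      rw [ha, hb]
      exact ((EF_atom hEF).1 i j).2.1
    | s2 =>
      obtain ⟨i, hi⟩ := term_var (ts 0)
      obtain ⟨j, hj⟩ := term_var (ts 1)
      have ha : Rlz R (BoundedFormula.rel TwoRelSym.s2 ts) a ↔ R.r2 (a i) (a j) := by
        have : Rlz R (BoundedFormula.rel TwoRelSym.s2 ts) a ↔
            R.r2 (teval R a (ts 0)) (teval R a (ts 1)) := Iff.rfl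
        rw [this, hi, hj, teval_var, teval_var]
      have hb : Rlz S (BoundedFormula.rel TwoRelSym.s2 ts) b ↔ S.r2 (b i) (b j) := by
        have : Rlz S (BoundedFormula.rel TwoRelSym.s2 ts) b ↔
            S.r2 (teval S b (ts 0)) (teval S b (ts 1)) := Iff.rfl
        rw [this, hi, hj, teval_var, teval_var]
      rw [ha, hb]
      exact ((EF_atom hEF).1 i j).2.2
  | imp f g ihf ihg =>
    intro k hk a b hEF
    rw [qdepth] at hk
    rw [Rlz_imp, Rlz_imp, ihf k (le_trans (le_max_left _ _) hk) hEF,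
      ihg k (le_trans (le_max_right _ _) hk) hEF]
  | all f ihf =>
    intro k hk a b hEF
    rw [qdepth] at hk
    obtain ⟨k', rfl⟩ : ∃ k', k = k' + 1 := ⟨k - 1, by omega⟩
    rw [Rlz_all, Rlz_all]
    constructor
    · intro hall y
      obtain ⟨x, hx⟩ := hEF.2.2 y
      exact (ihf k' (by omega) hx).mp (hall x)
    · intro hall x
      obtain ⟨y, hy⟩ := hEF.2.1 x
      exact (ihf k' (by omega) hy).mpr (hall y)

theorem Sat_iff_Rlz (R : Rel2 X) (φ : L2.Sentence) :
    R.Sat φ ↔ Rlz R φ (fun i => i.elim0) := by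
  have h1 : (default : Empty → X) = (fun e : Empty => e.elim) := funext fun e => e.elim
  have h2 : (default : Fin 0 → X) = (fun i : Fin 0 => i.elim0) := funext fun i => i.elim0
  show @BoundedFormula.Realize L2 X R.str Empty 0 φ default default ↔ _
  rw [h1, h2]
  exact Iff.rfl

end HatEF


/-- **The hat operation preserves `≡_k`.** If `M ≡_k N` are finite convex linear orders,
then `M̂ ≡_k N̂`. -/
theorem hat_preserves_eqK {X Y : Type} [Finite X] [Finite Y]
    (M : Rel2 X) (N : Rel2 Y) (hM : IsConvex M) (hN : IsConvex N)
    (k : ℕ) (h : EqK k M N) :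
    EqK k M.hat N.hat := by
  classical
  haveI : Fintype X := Fintype.ofFinite X
  intro φ hφ
  open HatEF in
  -- Step 1: EqK k M N gives EF equivalence of the empty tuples.
  have hEF : EF M N (fun _ => True) (fun _ => True) k
      (fun i : Fin 0 => i.elim0) (fun i : Fin 0 => i.elim0) := by
    have hMsat : M.Sat (hin M k 0 (fun i => i.elim0)) := by
      rw [Sat_iff_Rlz, Rlz_hin]
      exact EF_refl M _ k _
    have hNsat : N.Sat (hin M k 0 (fun i => i.elim0)) :=
      (h _ (qd_hin M k _)).mp hMsat
    rw [Sat_iff_Rlz, Rlz_hin] at hNsat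
    exact hNsat
  -- Step 2: hat strategy
  have hhat := hat_of_triv k hEF
  have hempty : ∀ {Z : Type} (f g : Fin 0 → Z), f = g := fun f g => funext fun i => i.elim0
  rw [hempty (fun i : Fin 0 => some ((fun i : Fin 0 => i.elim0) i)) (fun i : Fin 0 => i.elim0),
    hempty (fun i : Fin 0 => some ((fun i : Fin 0 => i.elim0) i)) (fun i : Fin 0 => i.elim0)] at hhat
  -- Step 3: transfer
  rw [Sat_iff_Rlz, Sat_iff_Rlz]
  exact EF_transfer φ k hφ hhat
end

section
/- Let S be a nonempty finite type and P : S → S → ℝ a stochastic matrix (P s t ≥ 0 for all s, t, and ∑_t P s t = 1 for every s). Suppose P is fully aperiodic: there do not exist an integer d > 1 and pairwise disjoint nonempty subsets A_0, …, A_{d−1} of S such that for every i < d and every s ∈ A_i, ∑_{t ∈ A_{(i+1) mod d}} P s t = 1. Then for every pair of states s, q ∈ S, the sequence n ↦ (P^n) s q of n-step transition probabilities (entries of the n-th matrix power of P) converges as n → ∞. -/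
/-!
Let `P` act on `S → ℂ` with the sup norm, where it is a contraction. On the generalized
eigenspace of an eigenvalue `‖μ‖ < 1` the powers tend to `0`, and on that of `μ = 1` a
contraction is the identity, since a nontrivial Jordan block makes orbits grow linearly. Every
vector is a sum of generalized eigenvectors, so it suffices that no other eigenvalue lies on the
unit circle. Let `P v = μ v` with `‖μ‖ = 1`, and let `‖v s‖` be maximal. Then `μ v s` is a convex
combination of the `v t` with `P s t > 0`, and it lies on the boundary circle of a disc that
contains all of them. By strict convexity, `v t = μ v s` for all these `t`, and `‖v t‖` is again
maximal. Starting from a maximal state `s₀`, every `μ ^ n v s₀` is therefore a value of `v`, so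
`μ` has finite order `d`. The level sets `{t | v t = μ ^ i v s₀}`, `i < d`, are then `d` cyclic
classes, and full aperiodicity forces `d = 1`, i.e. `μ = 1`.
-/

open Filter Finset Topology

theorem eq_sum_smul_of_norm_le {ι E : Type*} [Fintype ι] [NormedAddCommGroup E]
    [InnerProductSpace ℝ E] {p : ι → ℝ} {x : ι → E} (hp : ∀ i, 0 ≤ p i) (hp1 : ∑ i, p i = 1)
    (hx : ∀ i, ‖x i‖ ≤ ‖∑ i, p i • x i‖) {j : ι} (hj : 0 < p j) :
    x j = ∑ i, p i • x i := by
  set w := ∑ i, p i • x i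
  have hinner : ∑ i, p i * inner ℝ (x i) w = ‖w‖ ^ 2 := by
    rw [← real_inner_self_eq_norm_sq, sum_inner]
    simp [real_inner_smul_left, w]
  have hnorm : ∑ i, p i * ‖x i‖ ^ 2 ≤ ‖w‖ ^ 2 :=
    calc ∑ i, p i * ‖x i‖ ^ 2 ≤ ∑ i, p i * ‖w‖ ^ 2 := by
          gcongr with i
          · exact hp i
          · exact hx i
      _ = ‖w‖ ^ 2 := by rw [← sum_mul, hp1, one_mul]
  have hvar : ∑ i, p i * ‖x i - w‖ ^ 2 ≤ 0 :=
    calc ∑ i, p i * ‖x i - w‖ ^ 2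
        = ∑ i, p i * ‖x i‖ ^ 2 - 2 * ∑ i, p i * inner ℝ (x i) w + (∑ i, p i) * ‖w‖ ^ 2 := by
          simp_rw [norm_sub_sq_real, mul_sum, sum_mul, ← sum_sub_distrib, ← sum_add_distrib]
          congr 1 with i
          ring
      _ ≤ 0 := by rw [hinner, hp1]; linarith
  have hterm := (sum_eq_zero_iff_of_nonneg fun i _ => mul_nonneg (hp i) (sq_nonneg _)).1
    (le_antisymm hvar (sum_nonneg fun i _ => mul_nonneg (hp i) (sq_nonneg _))) j (mem_univ j)
  simpa [hj.ne', sub_eq_zero] using hterm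

theorem isOfFinOrder_of_forall_pow_mul_mem {M₀ : Type*} [MonoidWithZero M₀] [IsCancelMulZero M₀]
    {a c : M₀} (ha : a ≠ 0) (hc : c ≠ 0) {s : Set M₀} (hs : s.Finite) (h : ∀ n, a ^ n * c ∈ s) :
    IsOfFinOrder a := by
  obtain ⟨m, n, hmn, heq⟩ := hs.exists_lt_map_eq_of_forall_mem h
  refine isOfFinOrder_iff_pow_eq_one.2 ⟨n - m, by omega, mul_left_cancel₀ (pow_ne_zero m ha) ?_⟩
  rw [← pow_add, Nat.add_sub_cancel' hmn.le, mul_one]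
  exact (mul_right_cancel₀ hc heq).symm

namespace Module.End

theorem pow_apply_eq_sum_choose {R M : Type*} [CommRing R] [AddCommGroup M] [Module R M]
    {f : End R M} {μ : R} {k : ℕ} {v : M} (hv : ((f - μ • 1) ^ k) v = 0) {n : ℕ} (hn : k ≤ n) :
    (f ^ n) v = ∑ m ∈ range k, ((n.choose m : R) * μ ^ (n - m)) • ((f - μ • 1) ^ m) v := by
  have hcomm : Commute (f - μ • 1) (μ • 1) := (Commute.one_right _).smul_right μ
  have hterm (m : ℕ) : ((f - μ • 1) ^ m * (μ • 1) ^ (n - m) * (n.choose m : End R M)) v =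
      ((n.choose m : R) * μ ^ (n - m)) • ((f - μ • 1) ^ m) v := by
    simp [smul_pow, mul_smul, Nat.cast_smul_eq_nsmul, smul_comm (n.choose m)]
  conv_lhs => rw [← sub_add_cancel f (μ • 1), hcomm.add_pow, LinearMap.sum_apply]
  simp_rw [hterm]
  refine (sum_subset (range_subset_range.2 (by omega)) fun m _ hm => ?_).symm
  rw [pow_map_zero_of_le (not_lt.1 (mem_range.not.1 hm)) hv, smul_zero]

section NormedField

variable {𝕜 V : Type*} [NormedField 𝕜] [NormedAddCommGroup V] [NormedSpace 𝕜 V]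
  {f : End 𝕜 V}

theorem norm_pow_apply_le (hf : ∀ v, ‖f v‖ ≤ ‖v‖) (n : ℕ) (v : V) : ‖(f ^ n) v‖ ≤ ‖v‖ := by
  induction n with
  | zero => simp
  | succ n ih => rw [pow_succ', mul_apply]; exact (hf _).trans ih

theorem HasEigenvalue.norm_le_one (hf : ∀ v, ‖f v‖ ≤ ‖v‖) {μ : 𝕜} (hμ : f.HasEigenvalue μ) :
    ‖μ‖ ≤ 1 := by
  obtain ⟨v, hv⟩ := hμ.exists_hasEigenvector
  have := hf v
  rw [hv.apply_eq_smul, norm_smul] at this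
  exact (mul_le_iff_le_one_left (norm_pos_iff.2 hv.2)).1 this

theorem tendsto_pow_apply_of_mem_maxGenEigenspace [CompleteSpace 𝕜] {μ : 𝕜} (hμ : ‖μ‖ < 1)
    {v : V} (hv : v ∈ f.maxGenEigenspace μ) : Tendsto (fun n => (f ^ n) v) atTop (𝓝 0) := by
  obtain ⟨k, hk⟩ := (mem_maxGenEigenspace f μ v).1 hv
  have hcoeff (m : ℕ) : Tendsto (fun n => (n.choose m : 𝕜) * μ ^ (n - m)) atTop (𝓝 0) :=
    (tendsto_add_atTop_iff_nat m).1 <| by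
      simpa using (summable_choose_mul_geometric_of_norm_lt_one m hμ).tendsto_atTop_zero
  have hlim := tendsto_finsetSum (range k) fun m _ => (hcoeff m).smul_const (((f - μ • 1) ^ m) v)
  simp only [zero_smul, sum_const_zero] at hlim
  exact hlim.congr' <| (eventually_ge_atTop k).mono fun n hn => (pow_apply_eq_sum_choose hk hn).symm

end NormedField

theorem apply_eq_self_of_mem_maxGenEigenspace_one {𝕜 V : Type*} [RCLike 𝕜]
    [NormedAddCommGroup V] [NormedSpace 𝕜 V] {f : End 𝕜 V} (hf : ∀ v, ‖f v‖ ≤ ‖v‖) {v : V}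
    (hv : v ∈ f.maxGenEigenspace 1) : f v = v := by
  obtain ⟨k, hk⟩ := (mem_maxGenEigenspace f 1 v).1 hv
  rw [one_smul] at hk
  clear hv
  induction k generalizing v with
  | zero => simp_all
  | succ k ih =>
    set c := (f - 1) v
    have hc : f c = c := ih (by rw [← mul_apply, ← pow_succ, hk])
    have hfv : f v = v + c := by simp [c]
    have horbit (n : ℕ) : (f ^ n) v = v + (n : 𝕜) • c := by
      induction n with
      | zero => simp
      | succ n ihn => rw [pow_succ', mul_apply, ihn, map_add, hfv, map_smul, hc]; push_cast; module
    suffices c = 0 by rw [hfv, this, add_zero]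
    by_contra hc0
    obtain ⟨n, hn⟩ := exists_nat_gt (2 * ‖v‖ / ‖c‖)
    have hgrowth : n * ‖c‖ ≤ 2 * ‖v‖ :=
      calc n * ‖c‖ = ‖(f ^ n) v - v‖ := by
            rw [horbit, add_sub_cancel_left, norm_smul, RCLike.norm_natCast]
        _ ≤ ‖(f ^ n) v‖ + ‖v‖ := norm_sub_le _ _
        _ ≤ 2 * ‖v‖ := by linarith [norm_pow_apply_le hf n v]
    rw [div_lt_iff₀ (norm_pos_iff.2 hc0)] at hn
    linarith

theorem exists_tendsto_pow_apply {V : Type*} [NormedAddCommGroup V] [NormedSpace ℂ V]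
    [FiniteDimensional ℂ V] {f : End ℂ V} (hf : ∀ v, ‖f v‖ ≤ ‖v‖)
    (hspec : ∀ μ, f.HasEigenvalue μ → ‖μ‖ = 1 → μ = 1) (v : V) :
    ∃ L, Tendsto (fun n => (f ^ n) v) atTop (𝓝 L) := by
  have hv : v ∈ ⨆ μ, f.maxGenEigenspace μ := by
    rw [iSup_maxGenEigenspace_eq_top]
    exact Submodule.mem_top
  refine Submodule.iSup_induction _
    (motive := fun v => ∃ L, Tendsto (fun n => (f ^ n) v) atTop (𝓝 L)) hv (fun μ w hw => ?_)
    ⟨0, by simp⟩ fun x y ⟨Lx, hLx⟩ ⟨Ly, hLy⟩ => ⟨Lx + Ly, by simpa using hLx.add hLy⟩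
  by_cases hw0 : w = 0
  · exact ⟨0, by simp [hw0]⟩
  have hμ : f.HasEigenvalue μ :=
    HasUnifEigenvalue.lt zero_lt_one fun h => hw0 <| (Submodule.mem_bot ℂ).1 (h ▸ hw)
  rcases (hμ.norm_le_one hf).lt_or_eq with hlt | heq
  · exact ⟨0, tendsto_pow_apply_of_mem_maxGenEigenspace hlt hw⟩
  · rw [hspec μ hμ heq] at hw
    have hfix := apply_eq_self_of_mem_maxGenEigenspace_one hf hw
    exact ⟨w, tendsto_const_nhds.congr fun n => by rw [pow_apply, Function.iterate_fixed hfix]⟩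

end Module.End

namespace Matrix

variable {S : Type*} [Fintype S]

def HasCyclicClasses (P : Matrix S S ℝ) : Prop :=
  ∃ (d : ℕ) (hd : 1 < d) (A : Fin d → Finset S),
    (∀ i, (A i).Nonempty) ∧
    (∀ i j, i ≠ j → Disjoint (A i) (A j)) ∧
    (∀ i : Fin d, ∀ s ∈ A i, ∑ t ∈ A (i + ⟨1, hd⟩), P s t = 1)

theorem map_ofReal_mulVec_apply (P : Matrix S S ℝ) (v : S → ℂ) (s : S) :
    (P.map (↑) *ᵥ v) s = ∑ t, P s t • v t := by
  simp [mulVec, dotProduct, Complex.real_smul]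

variable [DecidableEq S] {P : Matrix S S ℝ}

theorem norm_map_ofReal_mulVec_le (hP : P ∈ rowStochastic ℝ S) (v : S → ℂ) :
    ‖P.map (↑) *ᵥ v‖ ≤ ‖v‖ := by
  refine (pi_norm_le_iff_of_nonneg (norm_nonneg v)).2 fun s => ?_
  calc ‖(P.map (↑) *ᵥ v) s‖ ≤ ∑ t, ‖P s t • v t‖ := by
        rw [map_ofReal_mulVec_apply]
        exact norm_sum_le _ _
    _ ≤ ∑ t, P s t * ‖v‖ := by
        gcongr with t
        rw [norm_smul, Real.norm_of_nonneg (hP.1 s t)]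
        exact mul_le_mul_of_nonneg_left (norm_le_pi_norm v t) (hP.1 s t)
    _ = ‖v‖ := by rw [← sum_mul, sum_row_of_mem_rowStochastic hP, one_mul]

theorem apply_eq_mul_of_mulVec_eq_smul (hP : P ∈ rowStochastic ℝ S) {μ : ℂ} {v : S → ℂ}
    (hv : P.map (↑) *ᵥ v = μ • v) (hμ : ‖μ‖ = 1) {s t : S} (hs : ∀ t, ‖v t‖ ≤ ‖v s‖)
    (hst : 0 < P s t) : v t = μ * v s := by
  have hsum : ∑ t, P s t • v t = μ * v s := by
    rw [← map_ofReal_mulVec_apply, hv]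
    rfl
  rw [← hsum]
  refine eq_sum_smul_of_norm_le (fun t => hP.1 s t) (sum_row_of_mem_rowStochastic hP s)
    (fun t => ?_) hst
  rw [hsum, norm_mul, hμ, one_mul]
  exact hs t

theorem exists_pos_of_mem_rowStochastic (hP : P ∈ rowStochastic ℝ S) (s : S) :
    ∃ t, 0 < P s t := by
  obtain ⟨t, -, ht⟩ := exists_lt_of_sum_lt (s := univ) (f := fun _ => (0 : ℝ)) (g := P s)
    (by simp [sum_row_of_mem_rowStochastic hP s])
  exact ⟨t, ht⟩

theorem hasCyclicClasses_of_mulVec_eq_smul (hP : P ∈ rowStochastic ℝ S) {μ : ℂ} (hμ : ‖μ‖ = 1)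
    (hμ1 : μ ≠ 1) {v : S → ℂ} (hv0 : v ≠ 0) (hv : P.map (↑) *ᵥ v = μ • v) :
    P.HasCyclicClasses := by
  obtain ⟨t₀, ht₀⟩ := Function.ne_iff.1 hv0
  have : Nonempty S := ⟨t₀⟩
  obtain ⟨s₀, hs₀⟩ := Finite.exists_max fun t => ‖v t‖
  set c := v s₀
  have hc : c ≠ 0 := norm_pos_iff.1 <| (norm_pos_iff.2 ht₀).trans_le (hs₀ t₀)
  have hstep (n : ℕ) (t : S) (ht : v t = μ ^ n * c) (x : S) (hx : 0 < P t x) :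
      v x = μ ^ (n + 1) * c := by
    have hmax (y : S) : ‖v y‖ ≤ ‖v t‖ := by
      rw [ht, norm_mul, norm_pow, hμ, one_pow, one_mul]
      exact hs₀ y
    rw [apply_eq_mul_of_mulVec_eq_smul hP hv hμ hmax hx, ht, pow_succ']
    ring
  have hreach (n : ℕ) : ∃ t, v t = μ ^ n * c := by
    induction n with
    | zero => exact ⟨s₀, by simp [c]⟩
    | succ n ih =>
      obtain ⟨t, ht⟩ := ih
      obtain ⟨x, hx⟩ := exists_pos_of_mem_rowStochastic hP t
      exact ⟨x, hstep n t ht x hx⟩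
  have hfin : IsOfFinOrder μ :=
    isOfFinOrder_of_forall_pow_mul_mem (norm_ne_zero_iff.1 (by simp [hμ])) hc (Set.finite_range v)
      hreach
  have hd : 1 < orderOf μ :=
    lt_of_le_of_ne hfin.orderOf_pos (Ne.symm (orderOf_eq_one_iff.not.2 hμ1))
  refine ⟨orderOf μ, hd, fun i => {t | v t = μ ^ (i : ℕ) * c}, fun i => ?_, fun i j hij => ?_,
    fun i t ht => ?_⟩
  · obtain ⟨t, ht⟩ := hreach i
    exact ⟨t, by simpa using ht⟩
  · refine disjoint_left.2 fun t hti htj => hij (Fin.ext (pow_injOn_Iio_orderOf i.2 j.2 ?_))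
    simp only [mem_filter, mem_univ, true_and] at hti htj
    exact mul_right_cancel₀ hc (hti.symm.trans htj)
  · rw [← sum_row_of_mem_rowStochastic hP t]
    refine sum_subset (subset_univ _) fun x _ hx => ?_
    by_contra hx0
    apply hx
    simp only [mem_filter, mem_univ, true_and, Fin.val_add, pow_mod_orderOf] at ht ⊢
    exact hstep i t ht x (lt_of_le_of_ne (hP.1 t x) (Ne.symm hx0))

end Matrix

theorem markov_fully_aperiodic_converges_general {S : Type} [Fintype S]
    [DecidableEq S] (P : Matrix S S ℝ)
    (hnonneg : ∀ s t, 0 ≤ P s t) (hrow : ∀ s, ∑ t, P s t = 1)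
    (hap : ¬ ∃ (d : ℕ) (hd : 1 < d) (A : Fin d → Finset S),
      (∀ i, (A i).Nonempty) ∧
      (∀ i j, i ≠ j → Disjoint (A i) (A j)) ∧
      (∀ i : Fin d, ∀ s ∈ A i, ∑ t ∈ A (i + ⟨1, hd⟩), P s t = 1)) :
    ∀ s q : S, ∃ L : ℝ, Filter.Tendsto (fun n : ℕ => (P ^ n) s q) Filter.atTop (nhds L) := by
  intro s q
  have hP : P ∈ Matrix.rowStochastic ℝ S := Matrix.mem_rowStochastic_iff_sum.2 ⟨hnonneg, hrow⟩
  set f : Module.End ℂ (S → ℂ) := Matrix.toLinAlgEquiv' (P.map (↑))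
  have hspec (μ : ℂ) (hμ : f.HasEigenvalue μ) (hμ1 : ‖μ‖ = 1) : μ = 1 := by
    by_contra hne
    obtain ⟨v, hv⟩ := hμ.exists_hasEigenvector
    exact hap (Matrix.hasCyclicClasses_of_mulVec_eq_smul hP hμ1 hne hv.2 hv.apply_eq_smul)
  obtain ⟨L, hL⟩ := Module.End.exists_tendsto_pow_apply (Matrix.norm_map_ofReal_mulVec_le hP)
    hspec (Pi.single q 1)
  have hentry (n : ℕ) : (f ^ n) (Pi.single q 1) s = (P ^ n) s q := by
    have hpow : P.map (↑) ^ n = (P ^ n).map Complex.ofRealHom :=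
      (P.map_pow Complex.ofRealHom n).symm
    simp [f, ← map_pow, hpow]
  have hlim := (Complex.continuous_re.tendsto _).comp (((continuous_apply s).tendsto L).comp hL)
  exact ⟨(L s).re, hlim.congr fun n => by simp [hentry]⟩

/-- **Convergence of transition probabilities for fully aperiodic finite Markov chains.**
Let `S` be a nonempty finite state space and `P` a stochastic matrix on `S` (nonnegative
entries, each row summing to `1`). Suppose `P` is fully aperiodic: there is no `d > 1`
together with pairwise disjoint nonempty subsets `A_0, …, A_{d-1}` of `S` such that from
every state of `A_i` the chain moves into `A_{(i+1) mod d}` with probability `1`. Then for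
all states `s, q`, the sequence `n ↦ (P^n) s q` of `n`-step transition probabilities
converges as `n → ∞`. -/
theorem markov_fully_aperiodic_converges {S : Type} [Fintype S] [Nonempty S]
    [DecidableEq S] (P : Matrix S S ℝ)
    (hnonneg : ∀ s t, 0 ≤ P s t) (hrow : ∀ s, ∑ t, P s t = 1)
    (hap : ¬ ∃ (d : ℕ) (hd : 1 < d) (A : Fin d → Finset S),
      (∀ i, (A i).Nonempty) ∧
      (∀ i j, i ≠ j → Disjoint (A i) (A j)) ∧
      (∀ i : Fin d, ∀ s ∈ A i, ∑ t ∈ A (i + ⟨1, hd⟩), P s t = 1)) :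
    ∀ s q : S, ∃ L : ℝ, Filter.Tendsto (fun n : ℕ => (P ^ n) s q) Filter.atTop (nhds L) :=
  markov_fully_aperiodic_converges_general P hnonneg hrow hap
end

section
/- For every natural number k, there do not exist an integer d > 1 and nonempty sets Q_0, …, Q_{d−1} of finite convex linear orders such that: each Q_i is closed under ≡_k (if M ∈ Q_i and M ≡_k N then N ∈ Q_i); no member of Q_i is ≡_k-equivalent to a member of Q_j for i ≠ j; and for every i < d and every C ∈ Q_i, both C ⊕ • ∈ Q_{(i+1) mod d} and Ĉ ∈ Q_{(i+1) mod d}. (Equivalently: the Markov chain whose states are the ≡_k-classes of finite convex linear orders, with transitions [C] ↦ [C ⊕ •] and [C] ↦ [Ĉ] each taken with probability 1/2, is fully aperiodic.) -/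
open FirstOrder Language Filter

/-- Transport a pair of relations along a bijection. -/
def Rel2.map {X Y : Type} (e : X ≃ Y) (R : Rel2 X) : Rel2 Y :=
  ⟨fun a b => R.r1 (e.symm a) (e.symm b), fun a b => R.r2 (e.symm a) (e.symm b)⟩

/-- The one-point convex linear order on `Fin 1`. -/
def pointF : Rel2 (Fin 1) := ⟨fun _ _ => False, fun _ _ => True⟩

/-- `C ⊕ •`, realized on `Fin (n+1)`. -/
def addPt {n : ℕ} (R : Rel2 (Fin n)) : Rel2 (Fin (n + 1)) :=
  (R.oplus pointF).map finSumFinEquiv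

/-- The equivalence `Option (Fin n) ≃ Fin (n+1)` sending the new point to the last point. -/
def optFinEquiv (n : ℕ) : Option (Fin n) ≃ Fin (n + 1) where
  toFun o := o.elim (Fin.last n) Fin.castSucc
  invFun j := if h : (j : ℕ) < n then some ⟨j, h⟩ else none
  left_inv o := by
    cases o with
    | none => simp
    | some i => simp [i.2]
  right_inv j := by
    rcases Nat.lt_or_ge (j : ℕ) n with h | h
    · simp [h]
    · have : (j : ℕ) = n := le_antisymm (Nat.lt_succ_iff.mp j.2) h
      simp only [this, lt_self_iff_false, dif_neg, not_false_iff]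
      simp [Option.elim, Fin.last, Fin.ext_iff, this]

/-- `Ĉ`, realized on `Fin (n+1)`. -/
def hatF {n : ℕ} (R : Rel2 (Fin n)) : Rel2 (Fin (n + 1)) :=
  R.hat.map (optFinEquiv n)

/-- A finite convex linear order, coded as a pair of relations on some `Fin n`. -/
abbrev FinCLO : Type := (n : ℕ) × Rel2 (Fin n)

lemma term_var {t : ℕ} (tm : L2.Term (Empty ⊕ Fin t)) :
    ∃ i, tm = FirstOrder.Language.Term.var (Sum.inr i) := by
  cases tm with
  | var x => cases x with
    | inl e => exact e.elim
    | inr i => exact ⟨i, rfl⟩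
  | func f _ => exact f.elim

lemma ef_realize {X Y : Type} (R : Rel2 X) (S : Rel2 Y)
    (G : ℕ → ∀ t : ℕ, (Fin t → X) → (Fin t → Y) → Prop)
    (hEq : ∀ j t v w, G j t v w → ∀ i i' : Fin t, v i = v i' ↔ w i = w i')
    (hR1 : ∀ j t v w, G j t v w → ∀ i i' : Fin t, R.r1 (v i) (v i') ↔ S.r1 (w i) (w i'))
    (hR2 : ∀ j t v w, G j t v w → ∀ i i' : Fin t, R.r2 (v i) (v i') ↔ S.r2 (w i) (w i'))
    (hForth : ∀ j t v w, G (j+1) t v w → ∀ x, ∃ y, G j (t+1) (Fin.snoc v x) (Fin.snoc w y))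
    (hBack : ∀ j t v w, G (j+1) t v w → ∀ y, ∃ x, G j (t+1) (Fin.snoc v x) (Fin.snoc w y))
    {t : ℕ} (φ : L2.BoundedFormula Empty t) :
    ∀ (j : ℕ), φ.qdepth ≤ j → ∀ v w, G j t v w →
      (@FirstOrder.Language.BoundedFormula.Realize L2 X R.str Empty t φ Empty.elim v ↔
       @FirstOrder.Language.BoundedFormula.Realize L2 Y S.str Empty t φ Empty.elim w) := by
  letI := R.str
  letI := S.str
  induction φ with
  | falsum =>
      intro j hj v w hG
      exact Iff.rfl
  | equal t1 t2 =>
      intro j hj v w hG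
      obtain ⟨i1, rfl⟩ := term_var t1
      obtain ⟨i2, rfl⟩ := term_var t2
      exact hEq j _ v w hG i1 i2
  | rel Rl ts =>
      intro j hj v w hG
      cases Rl with
      | s1 =>
          obtain ⟨i1, h1⟩ := term_var (ts 0)
          obtain ⟨i2, h2⟩ := term_var (ts 1)
          show R.r1 ((ts 0).realize (Sum.elim Empty.elim v)) ((ts 1).realize (Sum.elim Empty.elim v)) ↔
            S.r1 ((ts 0).realize (Sum.elim Empty.elim w)) ((ts 1).realize (Sum.elim Empty.elim w))
          rw [h1, h2]
          exact hR1 j _ v w hG i1 i2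
      | s2 =>
          obtain ⟨i1, h1⟩ := term_var (ts 0)
          obtain ⟨i2, h2⟩ := term_var (ts 1)
          show R.r2 ((ts 0).realize (Sum.elim Empty.elim v)) ((ts 1).realize (Sum.elim Empty.elim v)) ↔
            S.r2 ((ts 0).realize (Sum.elim Empty.elim w)) ((ts 1).realize (Sum.elim Empty.elim w))
          rw [h1, h2]
          exact hR2 j _ v w hG i1 i2
  | imp f g ihf ihg =>
      intro j hj v w hG
      simp only [BoundedFormula.qdepth, max_le_iff] at hj
      simp only [BoundedFormula.realize_imp]
      rw [ihf j hj.1 v w hG, ihg j hj.2 v w hG]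
  | all f ih =>
      intro j hj v w hG
      simp only [BoundedFormula.qdepth] at hj
      obtain ⟨j', rfl⟩ : ∃ j', j = j' + 1 := ⟨j - 1, by omega⟩
      simp only [BoundedFormula.realize_all]
      constructor
      · intro h y
        obtain ⟨x, hx⟩ := hBack j' _ v w hG y
        exact (ih j' (by omega) _ _ hx).mp (h x)
      · intro h x
        obtain ⟨y, hy⟩ := hForth j' _ v w hG x
        exact (ih j' (by omega) _ _ hy).mpr (h y)
lemma Rel2.ext' {X : Type} {A B : Rel2 X} (h1 : ∀ a b, A.r1 a b ↔ B.r1 a b)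
    (h2 : ∀ a b, A.r2 a b ↔ B.r2 a b) : A = B := by
  cases A; cases B
  simp only [Rel2.mk.injEq]
  constructor <;> funext a b
  · exact propext (h1 a b)
  · exact propext (h2 a b)

/-- `C` with `N` extra points added to (on top of) its last class. -/
def E (n N : ℕ) (R : Rel2 (Fin n)) : Rel2 (Fin (n + N)) where
  r1 a b :=
    if ha : (a : ℕ) < n then
      if hb : (b : ℕ) < n then R.r1 ⟨a, ha⟩ ⟨b, hb⟩ else True
    else
      if (b : ℕ) < n then False else (a : ℕ) < (b : ℕ)
  r2 a b :=
    if ha : (a : ℕ) < n then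
      if hb : (b : ℕ) < n then R.r2 ⟨a, ha⟩ ⟨b, hb⟩ else R.inLast ⟨a, ha⟩
    else
      if hb : (b : ℕ) < n then R.inLast ⟨b, hb⟩ else True

lemma E_zero (n : ℕ) (R : Rel2 (Fin n)) : E n 0 R = R := by
  apply Rel2.ext' <;> intro a b <;>
    simp [E, a.isLt, b.isLt, Fin.eta]

lemma inLast_E {n N : ℕ} {R : Rel2 (Fin n)} {a : Fin (n + N)} (ha : (a : ℕ) < n) :
    (E n N R).inLast a ↔ R.inLast ⟨a, ha⟩ := by
  constructor
  · intro h c hc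
    have hc' : ((⟨c.1, lt_of_lt_of_le c.2 (Nat.le_add_right n N)⟩ : Fin (n + N)) : ℕ) < n := c.2
    have := h ⟨c.1, lt_of_lt_of_le c.2 (Nat.le_add_right n N)⟩
    simp only [E, dif_pos ha, dif_pos hc', Fin.eta] at this
    exact this hc
  · intro h b hb
    simp only [E, dif_pos ha] at hb ⊢
    by_cases hbn : (b : ℕ) < n
    · simp only [dif_pos hbn] at hb ⊢
      exact h _ hb
    · simp only [dif_neg hbn]
      exact h
lemma inLast_E' {n N : ℕ} {R : Rel2 (Fin n)} {a : Fin (n + N)} (ha : n ≤ (a : ℕ)) :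
    (E n N R).inLast a := by
  intro b hb
  simp only [E, dif_neg (Nat.not_lt.2 ha)] at hb ⊢
  by_cases hbn : (b : ℕ) < n
  · simp only [if_pos hbn] at hb
  · simp only [dif_neg hbn]

lemma optFinEquiv_symm (m : ℕ) (a : Fin (m + 1)) :
    (optFinEquiv m).symm a = if h : (a : ℕ) < m then some ⟨a, h⟩ else none := rfl

lemma hatF_E (n N : ℕ) (R : Rel2 (Fin n)) : hatF (E n N R) = E n (N + 1) R := by
  apply Rel2.ext' <;> intro a b <;>
    [show (E n N R).hat.r1 ((optFinEquiv (n+N)).symm a) ((optFinEquiv (n+N)).symm b) ↔ _;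
     show (E n N R).hat.r2 ((optFinEquiv (n+N)).symm a) ((optFinEquiv (n+N)).symm b) ↔ _] <;>
    (have ha2 := a.isLt) <;> (have hb2 := b.isLt) <;>
    rcases Nat.lt_or_ge (a : ℕ) (n + N) with haM | haM <;>
    rcases Nat.lt_or_ge (b : ℕ) (n + N) with hbM | hbM <;>
    simp only [optFinEquiv_symm, dif_pos haM, dif_pos hbM,
      dif_neg (Nat.not_lt.2 haM), dif_neg (Nat.not_lt.2 hbM), Rel2.hat, E, Fin.val_mk] <;>
    split_ifs <;> first
      | exact Iff.rfl
      | omega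
      | (exact inLast_E (R := R) ‹_›)
      | (exact iff_of_true (inLast_E' (Nat.not_lt.1 ‹_›)) trivial)
      | (constructor <;> intro <;> first | trivial | omega)
      | (constructor <;> (intro h; first | exact h.elim | omega))
/-- The cut condition: `w` is the image of `v` under the embedding skipping position `c`. -/
def EFCut (n N c : ℕ) {t : ℕ} (v : Fin t → Fin (n + N)) (w : Fin t → Fin (n + N + 1)) : Prop :=
  ∀ i, (w i : ℕ) = if (v i : ℕ) < c then (v i : ℕ) else (v i : ℕ) + 1

/-- The invariant: the cut `c` is `2^j`-far from all anchors and boundaries. -/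
def EFInv (n N c j : ℕ) {t : ℕ} (v : Fin t → Fin (n + N)) : Prop :=
  n + 2 ^ j ≤ c ∧ c + 2 ^ j ≤ n + N ∧ ∀ i, (v i : ℕ) + 2 ^ j ≤ c ∨ c + 2 ^ j ≤ (v i : ℕ)

/-- The back-and-forth system. -/
def EFG (n N j t : ℕ) (v : Fin t → Fin (n + N)) (w : Fin t → Fin (n + N + 1)) : Prop :=
  ∃ c, EFCut n N c v w ∧ EFInv n N c j v

lemma moveLow {n N j c t : ℕ} {v : Fin t → Fin (n + N)}
    (h1 : n + 2 ^ (j + 1) ≤ c) (h2 : c + 2 ^ (j + 1) ≤ n + N)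
    (h3 : ∀ i, (v i : ℕ) + 2 ^ (j + 1) ≤ c ∨ c + 2 ^ (j + 1) ≤ (v i : ℕ))
    (x : ℕ) (hx : x ≤ c) :
    ∃ c', x + 2 ^ j ≤ c' ∧ n + 2 ^ j ≤ c' ∧ c' + 2 ^ j ≤ n + N ∧
      ∀ i, ((v i : ℕ) < c ↔ (v i : ℕ) < c') ∧
        ((v i : ℕ) + 2 ^ j ≤ c' ∨ c' + 2 ^ j ≤ (v i : ℕ)) := by
  have hp : 2 ^ (j + 1) = 2 ^ j + 2 ^ j := by ring
  have hp1 : 1 ≤ 2 ^ j := Nat.one_le_two_pow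
  by_cases hfar : x + 2 ^ j ≤ c
  · exact ⟨c, hfar, by omega, by omega, fun i => by have := h3 i; omega⟩
  · exact ⟨x + 2 ^ j, by omega, by omega, by omega, fun i => by have := h3 i; omega⟩

lemma moveHigh {n N j c t : ℕ} {v : Fin t → Fin (n + N)}
    (h1 : n + 2 ^ (j + 1) ≤ c) (h2 : c + 2 ^ (j + 1) ≤ n + N)
    (h3 : ∀ i, (v i : ℕ) + 2 ^ (j + 1) ≤ c ∨ c + 2 ^ (j + 1) ≤ (v i : ℕ))
    (x : ℕ) (hx : c ≤ x) (hxN : x < n + N) :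
    ∃ c', c' + 2 ^ j ≤ x ∧ n + 2 ^ j ≤ c' ∧ c' + 2 ^ j ≤ n + N ∧
      ∀ i, ((v i : ℕ) < c ↔ (v i : ℕ) < c') ∧
        ((v i : ℕ) + 2 ^ j ≤ c' ∨ c' + 2 ^ j ≤ (v i : ℕ)) := by
  have hp : 2 ^ (j + 1) = 2 ^ j + 2 ^ j := by ring
  have hp1 : 1 ≤ 2 ^ j := Nat.one_le_two_pow
  by_cases hfar : c + 2 ^ j ≤ x
  · exact ⟨c, hfar, by omega, by omega, fun i => by have := h3 i; omega⟩
  · exact ⟨x - 2 ^ j, by omega, by omega, by omega, fun i => by have := h3 i; omega⟩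

lemma GG_forth (n N : ℕ) : ∀ j t v w, EFG n N (j + 1) t v w →
    ∀ x, ∃ y, EFG n N j (t + 1) (Fin.snoc v x) (Fin.snoc w y) := by
  rintro j t v w ⟨c, hcut, h1, h2, h3⟩ x
  have hp1 : 1 ≤ 2 ^ j := Nat.one_le_two_pow
  by_cases hx : (x : ℕ) < c
  · obtain ⟨c', hxc', hb1, hb2, hi⟩ := moveLow h1 h2 h3 x (le_of_lt hx)
    refine ⟨⟨(x : ℕ), by omega⟩, c', ?_, hb1, hb2, ?_⟩
    · intro i
      refine Fin.lastCases ?_ (fun i => ?_) i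
      · simp only [Fin.snoc_last]
        rw [if_pos (by omega)]
      · simp only [Fin.snoc_castSucc]
        have ha := hcut i
        have hb := (hi i).1
        split_ifs at ha ⊢ <;> omega
    · intro i
      refine Fin.lastCases ?_ (fun i => ?_) i
      · simp only [Fin.snoc_last]
        exact Or.inl hxc'
      · simp only [Fin.snoc_castSucc]
        exact (hi i).2
  · obtain ⟨c', hxc', hb1, hb2, hi⟩ := moveHigh h1 h2 h3 x (by omega) x.isLt
    refine ⟨⟨(x : ℕ) + 1, by have := x.isLt; omega⟩, c', ?_, hb1, hb2, ?_⟩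
    · intro i
      refine Fin.lastCases ?_ (fun i => ?_) i
      · simp only [Fin.snoc_last]
        rw [if_neg (by omega)]
      · simp only [Fin.snoc_castSucc]
        have ha := hcut i
        have hb := (hi i).1
        split_ifs at ha ⊢ <;> omega
    · intro i
      refine Fin.lastCases ?_ (fun i => ?_) i
      · simp only [Fin.snoc_last]
        exact Or.inr (by omega)
      · simp only [Fin.snoc_castSucc]
        exact (hi i).2

lemma GG_back (n N : ℕ) : ∀ j t v w, EFG n N (j + 1) t v w →
    ∀ y, ∃ x, EFG n N j (t + 1) (Fin.snoc v x) (Fin.snoc w y) := by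
  rintro j t v w ⟨c, hcut, h1, h2, h3⟩ y
  have hp1 : 1 ≤ 2 ^ j := Nat.one_le_two_pow
  have hp : 2 ^ (j + 1) = 2 ^ j + 2 ^ j := by ring
  have hy1 := y.isLt
  by_cases hy : (y : ℕ) ≤ c
  · obtain ⟨c', hxc', hb1, hb2, hi⟩ := moveLow h1 h2 h3 (y : ℕ) hy
    refine ⟨⟨(y : ℕ), by omega⟩, c', ?_, hb1, hb2, ?_⟩
    · intro i
      refine Fin.lastCases ?_ (fun i => ?_) i
      · simp only [Fin.snoc_last]
        rw [if_pos (by omega)]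
      · simp only [Fin.snoc_castSucc]
        have ha := hcut i
        have hb := (hi i).1
        split_ifs at ha ⊢ <;> omega
    · intro i
      refine Fin.lastCases ?_ (fun i => ?_) i
      · simp only [Fin.snoc_last]
        exact Or.inl (by omega)
      · simp only [Fin.snoc_castSucc]
        exact (hi i).2
  · obtain ⟨c', hxc', hb1, hb2, hi⟩ := moveHigh h1 h2 h3 ((y : ℕ) - 1) (by omega) (by omega)
    refine ⟨⟨(y : ℕ) - 1, by omega⟩, c', ?_, hb1, hb2, ?_⟩
    · intro i
      refine Fin.lastCases ?_ (fun i => ?_) i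
      · simp only [Fin.snoc_last]
        rw [if_neg (by omega)]
        omega
      · simp only [Fin.snoc_castSucc]
        have ha := hcut i
        have hb := (hi i).1
        split_ifs at ha ⊢ <;> omega
    · intro i
      refine Fin.lastCases ?_ (fun i => ?_) i
      · simp only [Fin.snoc_last]
        exact Or.inr (by omega)
      · simp only [Fin.snoc_castSucc]
        exact (hi i).2
lemma EFG_eq {n N j t : ℕ} {v : Fin t → Fin (n + N)} {w : Fin t → Fin (n + N + 1)}
    (hG : EFG n N j t v w) (i i' : Fin t) : v i = v i' ↔ w i = w i' := by
  obtain ⟨c, hcut, h1, h2, h3⟩ := hG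
  have ha := hcut i
  have hb := hcut i'
  rw [Fin.ext_iff, Fin.ext_iff]
  split_ifs at ha hb <;> omega

lemma EFG_facts {n N j t : ℕ} {v : Fin t → Fin (n + N)} {w : Fin t → Fin (n + N + 1)}
    (hG : EFG n N j t v w) (i : Fin t) :
    ((v i : ℕ) < n ↔ (w i : ℕ) < n) ∧ ((v i : ℕ) < n → (w i : ℕ) = (v i : ℕ)) := by
  obtain ⟨c, hcut, h1, h2, h3⟩ := hG
  have hp1 : 1 ≤ 2 ^ j := Nat.one_le_two_pow
  have ha := hcut i
  split_ifs at ha <;> omega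

lemma EFG_mono {n N j t : ℕ} {v : Fin t → Fin (n + N)} {w : Fin t → Fin (n + N + 1)}
    (hG : EFG n N j t v w) (i i' : Fin t) : ((v i : ℕ) < (v i' : ℕ)) ↔ ((w i : ℕ) < (w i' : ℕ)) := by
  obtain ⟨c, hcut, h1, h2, h3⟩ := hG
  have ha := hcut i
  have hb := hcut i'
  split_ifs at ha hb <;> omega

lemma EFG_r1 {n N j t : ℕ} (R : Rel2 (Fin n)) {v : Fin t → Fin (n + N)} {w : Fin t → Fin (n + N + 1)}
    (hG : EFG n N j t v w) (i i' : Fin t) :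
    (E n N R).r1 (v i) (v i') ↔ (E n (N + 1) R).r1 (w i) (w i') := by
  have f := EFG_facts hG i
  have f' := EFG_facts hG i'
  simp only [E]
  by_cases hv : (v i : ℕ) < n
  · have hw : (w i : ℕ) < n := f.1.mp hv
    have hwv : (w i : ℕ) = (v i : ℕ) := f.2 hv
    by_cases hv' : (v i' : ℕ) < n
    · have hw' : (w i' : ℕ) < n := f'.1.mp hv'
      have hwv' : (w i' : ℕ) = (v i' : ℕ) := f'.2 hv'
      rw [dif_pos hv, dif_pos hv', dif_pos hw, dif_pos hw']
      have e1 : (⟨(w i : ℕ), hw⟩ : Fin n) = ⟨(v i : ℕ), hv⟩ := Fin.ext hwv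
      have e2 : (⟨(w i' : ℕ), hw'⟩ : Fin n) = ⟨(v i' : ℕ), hv'⟩ := Fin.ext hwv'
      rw [e1, e2]
    · have hw' : ¬ (w i' : ℕ) < n := fun h => hv' (f'.1.mpr h)
      rw [dif_pos hv, dif_pos hw, dif_neg hv', dif_neg hw']
  · have hw : ¬ (w i : ℕ) < n := fun h => hv (f.1.mpr h)
    by_cases hv' : (v i' : ℕ) < n
    · have hw' : (w i' : ℕ) < n := f'.1.mp hv'
      rw [dif_neg hv, dif_neg hw, if_pos hv', if_pos hw']
    · have hw' : ¬ (w i' : ℕ) < n := fun h => hv' (f'.1.mpr h)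
      rw [dif_neg hv, dif_neg hw, if_neg hv', if_neg hw']
      exact EFG_mono hG i i'

lemma EFG_r2 {n N j t : ℕ} (R : Rel2 (Fin n)) {v : Fin t → Fin (n + N)} {w : Fin t → Fin (n + N + 1)}
    (hG : EFG n N j t v w) (i i' : Fin t) :
    (E n N R).r2 (v i) (v i') ↔ (E n (N + 1) R).r2 (w i) (w i') := by
  have f := EFG_facts hG i
  have f' := EFG_facts hG i'
  simp only [E]
  by_cases hv : (v i : ℕ) < n
  · have hw : (w i : ℕ) < n := f.1.mp hv
    have hwv : (w i : ℕ) = (v i : ℕ) := f.2 hv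
    have e1 : (⟨(w i : ℕ), hw⟩ : Fin n) = ⟨(v i : ℕ), hv⟩ := Fin.ext hwv
    by_cases hv' : (v i' : ℕ) < n
    · have hw' : (w i' : ℕ) < n := f'.1.mp hv'
      have hwv' : (w i' : ℕ) = (v i' : ℕ) := f'.2 hv'
      have e2 : (⟨(w i' : ℕ), hw'⟩ : Fin n) = ⟨(v i' : ℕ), hv'⟩ := Fin.ext hwv'
      rw [dif_pos hv, dif_pos hv', dif_pos hw, dif_pos hw', e1, e2]
    · have hw' : ¬ (w i' : ℕ) < n := fun h => hv' (f'.1.mpr h)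
      rw [dif_pos hv, dif_pos hw, dif_neg hv', dif_neg hw', e1]
  · have hw : ¬ (w i : ℕ) < n := fun h => hv (f.1.mpr h)
    by_cases hv' : (v i' : ℕ) < n
    · have hw' : (w i' : ℕ) < n := f'.1.mp hv'
      have hwv' : (w i' : ℕ) = (v i' : ℕ) := f'.2 hv'
      have e2 : (⟨(w i' : ℕ), hw'⟩ : Fin n) = ⟨(v i' : ℕ), hv'⟩ := Fin.ext hwv'
      rw [dif_neg hv, dif_neg hw, dif_pos hv', dif_pos hw', e2]
    · have hw' : ¬ (w i' : ℕ) < n := fun h => hv' (f'.1.mpr h)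
      rw [dif_neg hv, dif_neg hw, dif_neg hv', dif_neg hw']

/-- The key equivalence: adding `2^(k+1)` or `2^(k+1)+1` points to the last class
gives `≡ₖ`-equivalent structures. -/
lemma EqK_E (k n : ℕ) (R : Rel2 (Fin n)) :
    EqK k (E n (2 ^ (k + 1)) R) (E n (2 ^ (k + 1) + 1) R) := by
  intro φ hφ
  set N := 2 ^ (k + 1) with hN
  have main := ef_realize (E n N R) (E n (N + 1) R) (EFG n N)
    (fun j t v w h => EFG_eq h)
    (fun j t v w h => EFG_r1 R h)
    (fun j t v w h => EFG_r2 R h)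
    (GG_forth n N) (GG_back n N) φ k hφ
  have hG0 : EFG n N k 0 (fun i => i.elim0) (fun i => i.elim0) := by
    refine ⟨n + 2 ^ k, fun i => i.elim0, le_refl _, ?_, fun i => i.elim0⟩
    have hp : 2 ^ (k + 1) = 2 ^ k + 2 ^ k := by ring
    omega
  have main' := main (fun i => i.elim0) (fun i => i.elim0) hG0
  have e1 : ∀ (X : Type) (st : L2.Structure X) (f : Empty → X) (v : Fin 0 → X),
      @FirstOrder.Language.BoundedFormula.Realize L2 X st Empty 0 φ f v ↔
        @FirstOrder.Language.Sentence.Realize L2 X st φ := by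
    intro X st f v
    unfold FirstOrder.Language.Sentence.Realize FirstOrder.Language.Formula.Realize
    congr!
  exact ((e1 _ _ _ _).symm).trans (main'.trans (e1 _ _ _ _))
/-- **Full aperiodicity of the chain on `≡_k`-classes of convex linear orders.**
For every `k` there do not exist `d > 1` and nonempty sets `Q_0, …, Q_{d-1}` of finite
convex linear orders, each closed under `≡_k`, pairwise `≡_k`-inequivalent, such that for
every `C ∈ Q_i` both `C ⊕ •` and `Ĉ` lie in `Q_{(i+1) mod d}`. -/
theorem convex_chain_fully_aperiodic (k : ℕ) :
    ¬ ∃ (d : ℕ) (hd : 1 < d) (Q : Fin d → Set FinCLO),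
      (∀ i, ∀ R ∈ Q i, IsConvex R.2) ∧
      (∀ i, (Q i).Nonempty) ∧
      (∀ i, ∀ R ∈ Q i, ∀ S : FinCLO, IsConvex S.2 → EqK k R.2 S.2 → S ∈ Q i) ∧
      (∀ i j, i ≠ j → ∀ R ∈ Q i, ∀ S ∈ Q j, ¬ EqK k R.2 S.2) ∧
      (∀ i, ∀ R ∈ Q i,
        (⟨R.1 + 1, addPt R.2⟩ : FinCLO) ∈ Q (i + ⟨1, hd⟩) ∧
        (⟨R.1 + 1, hatF R.2⟩ : FinCLO) ∈ Q (i + ⟨1, hd⟩)) := by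
  rintro ⟨d, hd, Q, -, hne, -, hdisj, hstep⟩
  haveI : NeZero d := ⟨by omega⟩
  obtain ⟨⟨n, R⟩, hmem⟩ := hne 0
  have chain : ∀ N : ℕ, ∃ a : Fin d, (⟨n + N, E n N R⟩ : FinCLO) ∈ Q a := by
    intro N
    induction N with
    | zero => exact ⟨0, by rw [E_zero]; exact hmem⟩
    | succ N ih =>
        obtain ⟨a, ha⟩ := ih
        refine ⟨a + ⟨1, hd⟩, ?_⟩
        have h := (hstep a _ ha).2
        rw [hatF_E] at h
        exact h
  obtain ⟨a, haN⟩ := chain (2 ^ (k + 1))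
  have haN1 : (⟨n + 2 ^ (k + 1) + 1, E n (2 ^ (k + 1) + 1) R⟩ : FinCLO) ∈ Q (a + ⟨1, hd⟩) := by
    have h := (hstep a _ haN).2
    rw [hatF_E] at h
    exact h
  have hane : a ≠ a + ⟨1, hd⟩ := by
    intro h
    have h0 : (0 : Fin d) = ⟨1, hd⟩ := by
      apply add_left_cancel (a := a)
      rw [add_zero, ← h]
    have h1 := congrArg Fin.val h0
    simp only [Fin.val_zero] at h1
    exact absurd h1.symm one_ne_zero
  exact hdisj a (a + ⟨1, hd⟩) hane _ haN _ haN1 (EqK_E k n R)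
end

section
/- For every n ≥ 1 there exists a bijection f from the set of fractured orders (E, ≺₁, ≺₂) on {1, …, n} onto the set of convex linear orders (<, E) on {1, …, n} such that for every fractured order M and all points a, b: (i) a E b holds in M if and only if a E b holds in f(M); (ii) a ≺₁ b holds in M if and only if ¬(a E b) ∧ a < b holds in f(M); and (iii) a ≺₂ b holds in M if and only if a E b ∧ a < b holds in f(M). (Hence fractured orders and convex linear orders are uniformly interdefinable.) -/
open FirstOrder Language Filter

/-- `r` is a strict partial order. -/
def IsSPO {X : Type} (r : X → X → Prop) : Prop :=
  (∀ a, ¬ r a a) ∧ (∀ a b c, r a b → r b c → r a c)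

/-- A triple of binary relations on `X`. -/
structure Rel3 (X : Type) : Type where
  r1 : X → X → Prop
  r2 : X → X → Prop
  r3 : X → X → Prop

/-- `(r1, r2, r3) = (E, ≺₁, ≺₂)` is a fractured order: `E` is an equivalence relation,
`≺₁` and `≺₂` are strict partial orders, distinct points are `≺₁`-comparable iff not
`E`-related, distinct points are `≺₂`-comparable iff `E`-related, and `≺₁` lifts along
`E`. -/
def IsFractured {X : Type} (R : Rel3 X) : Prop :=
  Equivalence R.r1 ∧ IsSPO R.r2 ∧ IsSPO R.r3 ∧
    (∀ a b, a ≠ b → ((R.r2 a b ∨ R.r2 b a) ↔ ¬ R.r1 a b)) ∧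
    (∀ a b, a ≠ b → ((R.r3 a b ∨ R.r3 b a) ↔ R.r1 a b)) ∧
    (∀ a a' b, R.r1 a a' → R.r2 a b → R.r2 a' b)

section Interdef

variable {X : Type}

/-- From a fractured order, build the candidate convex linear order. -/
def toConvex (R : Rel3 X) : Rel2 X :=
  ⟨fun a b => R.r2 a b ∨ R.r3 a b, R.r1⟩

/-- From a convex linear order, build the candidate fractured order. -/
def toFrac (S : Rel2 X) : Rel3 X :=
  ⟨S.r2, fun a b => ¬ S.r2 a b ∧ S.r1 a b, fun a b => S.r2 a b ∧ S.r1 a b⟩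

lemma Rel2.ext'_s16 {R S : Rel2 X} (h1 : ∀ a b, R.r1 a b ↔ S.r1 a b)
    (h2 : ∀ a b, R.r2 a b ↔ S.r2 a b) : R = S := by
  cases R; cases S
  simp only [Rel2.mk.injEq]
  exact ⟨funext fun a => funext fun b => propext (h1 a b),
         funext fun a => funext fun b => propext (h2 a b)⟩

lemma Rel3.ext'_s16 {R S : Rel3 X} (h1 : ∀ a b, R.r1 a b ↔ S.r1 a b)
    (h2 : ∀ a b, R.r2 a b ↔ S.r2 a b) (h3 : ∀ a b, R.r3 a b ↔ S.r3 a b) : R = S := by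
  cases R; cases S
  simp only [Rel3.mk.injEq]
  exact ⟨funext fun a => funext fun b => propext (h1 a b),
         funext fun a => funext fun b => propext (h2 a b),
         funext fun a => funext fun b => propext (h3 a b)⟩

lemma frac_r2_not_E {R : Rel3 X} (h : IsFractured R) {a b : X} (hab : R.r2 a b) :
    ¬ R.r1 a b := by
  have hne : a ≠ b := fun e => h.2.1.1 a (e ▸ hab)
  exact (h.2.2.2.1 a b hne).1 (Or.inl hab)

lemma frac_r3_E {R : Rel3 X} (h : IsFractured R) {a b : X} (hab : R.r3 a b) :
    R.r1 a b := by
  have hne : a ≠ b := fun e => h.2.2.1.1 a (e ▸ hab)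
  exact (h.2.2.2.2.1 a b hne).1 (Or.inl hab)

/-- `≺₁` also lifts along `E` on the right. -/
lemma frac_lift_right {R : Rel3 X} (h : IsFractured R) {a b c : X}
    (hab : R.r2 a b) (hbc : R.r1 b c) : R.r2 a c := by
  have hE := h.1
  have hnac : ¬ R.r1 a c := fun hac => frac_r2_not_E h hab (hE.trans hac (hE.symm hbc))
  have hne : a ≠ c := fun e => hnac (e ▸ hE.refl a)
  rcases (h.2.2.2.1 a c hne).2 hnac with h' | h'
  · exact h'
  · exact absurd (h.2.1.2 a b a hab (h.2.2.2.2.2 c b a (h.1.symm hbc) h')) (h.2.1.1 a)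

lemma toConvex_isConvex {R : Rel3 X} (h : IsFractured R) : IsConvex (toConvex R) := by
  obtain ⟨hE, h2, h3, hc2, hc3, hlift⟩ := h
  have h' : IsFractured R := ⟨hE, h2, h3, hc2, hc3, hlift⟩
  refine ⟨⟨?_, ?_, ?_⟩, hE, ?_⟩
  · rintro a (ha | ha)
    · exact h2.1 a ha
    · exact h3.1 a ha
  · rintro a b c (hab | hab) (hbc | hbc)
    · exact Or.inl (h2.2 a b c hab hbc)
    · exact Or.inl (frac_lift_right h' hab (frac_r3_E h' hbc))
    · exact Or.inl (hlift b a c (hE.symm (frac_r3_E h' hab)) hbc)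
    · exact Or.inr (h3.2 a b c hab hbc)
  · intro a b hne
    by_cases hE' : R.r1 a b
    · rcases (hc3 a b hne).2 hE' with h'' | h''
      · exact Or.inl (Or.inr h'')
      · exact Or.inr (Or.inr h'')
    · rcases (hc2 a b hne).2 hE' with h'' | h''
      · exact Or.inl (Or.inl h'')
      · exact Or.inr (Or.inl h'')
  · intro a b c hab hac hcb
    have hEac : R.r1 a c := by
      by_contra hn
      have hac' : R.r2 a c := hac.resolve_right fun h'' => hn (frac_r3_E h' h'')
      have hEcb : ¬ R.r1 c b := fun hcb' => hn (hE.trans hab (hE.symm hcb'))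
      have hcb' : R.r2 c b := hcb.resolve_right fun h'' => hEcb (frac_r3_E h' h'')
      exact h2.1 c (h2.2 c b c hcb' (hlift a b c hab hac'))
    exact ⟨hEac, hE.trans (hE.symm hEac) hab⟩

lemma toFrac_isFractured {S : Rel2 X} (h : IsConvex S) : IsFractured (toFrac S) := by
  obtain ⟨⟨hirr, htr, htot⟩, hE, hconv⟩ := h
  refine ⟨hE, ⟨?_, ?_⟩, ⟨?_, ?_⟩, ?_, ?_, ?_⟩
  · rintro a ⟨hne, _⟩; exact hne (hE.refl a)
  · rintro a b c ⟨hnab, hab⟩ ⟨hnbc, hbc⟩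
    refine ⟨fun hac => hnab (hconv a c b hac hab hbc).1, htr a b c hab hbc⟩
  · rintro a ⟨_, ha⟩; exact hirr a ha
  · rintro a b c ⟨hab, hab'⟩ ⟨hbc, hbc'⟩
    exact ⟨hE.trans hab hbc, htr a b c hab' hbc'⟩
  · intro a b hne
    constructor
    · rintro (⟨hn, _⟩ | ⟨hn, _⟩)
      · exact hn
      · exact fun h'' => hn (hE.symm h'')
    · intro hn
      rcases htot a b hne with h'' | h''
      · exact Or.inl ⟨hn, h''⟩
      · exact Or.inr ⟨fun h3 => hn (hE.symm h3), h''⟩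
  · intro a b hne
    constructor
    · rintro (⟨hn, _⟩ | ⟨hn, _⟩)
      · exact hn
      · exact hE.symm hn
    · intro hn
      rcases htot a b hne with h'' | h''
      · exact Or.inl ⟨hn, h''⟩
      · exact Or.inr ⟨hE.symm hn, h''⟩
  · rintro a a' b haa' ⟨hnab, hab⟩
    have hna'b : ¬ S.r2 a' b := fun h'' => hnab (hE.trans haa' h'')
    refine ⟨hna'b, ?_⟩
    by_cases he : a' = b
    · exact absurd (he ▸ hE.refl a') hna'b
    rcases htot a' b he with h'' | h''
    · exact h''
    · by_cases hea : a = a'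
      · exact absurd (hea ▸ hab) (fun hh => hirr a' (htr a' b a' hh h''))
      · exact absurd (hconv a a' b haa' hab h'').1 hnab

lemma toFrac_toConvex {R : Rel3 X} (h : IsFractured R) : toFrac (toConvex R) = R := by
  refine Rel3.ext'_s16 (fun a b => Iff.rfl) (fun a b => ?_) (fun a b => ?_)
  · show (¬ R.r1 a b ∧ (R.r2 a b ∨ R.r3 a b)) ↔ R.r2 a b
    constructor
    · rintro ⟨hn, hab | hab⟩
      · exact hab
      · exact absurd (frac_r3_E h hab) hn
    · exact fun hab => ⟨frac_r2_not_E h hab, Or.inl hab⟩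
  · show (R.r1 a b ∧ (R.r2 a b ∨ R.r3 a b)) ↔ R.r3 a b
    constructor
    · rintro ⟨hn, hab | hab⟩
      · exact absurd hn (frac_r2_not_E h hab)
      · exact hab
    · exact fun hab => ⟨frac_r3_E h hab, Or.inr hab⟩

lemma toConvex_toFrac {S : Rel2 X} (h : IsConvex S) : toConvex (toFrac S) = S := by
  refine Rel2.ext'_s16 (fun a b => ?_) (fun a b => Iff.rfl)
  show (¬ S.r2 a b ∧ S.r1 a b) ∨ (S.r2 a b ∧ S.r1 a b) ↔ S.r1 a b
  constructor
  · rintro (⟨_, hab⟩ | ⟨_, hab⟩) <;> exact hab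
  · intro hab
    by_cases h2 : S.r2 a b
    · exact Or.inr ⟨h2, hab⟩
    · exact Or.inl ⟨h2, hab⟩

end Interdef

/-- **Uniform interdefinability of fractured orders and convex linear orders.**
For every `n ≥ 1` there is a bijection `f` from the fractured orders `(E, ≺₁, ≺₂)` on
`{1, …, n}` onto the convex linear orders `(<, E)` on `{1, …, n}` such that for every
fractured order `M` and all points `a, b`:
(i) `a E b` in `M` iff `a E b` in `f M`;
(ii) `a ≺₁ b` in `M` iff `¬(a E b) ∧ a < b` in `f M`;
(iii) `a ≺₂ b` in `M` iff `a E b ∧ a < b` in `f M`. -/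
theorem fractured_convex_interdefinable (n : ℕ) (hn : 1 ≤ n) :
    ∃ f : {R : Rel3 (Fin n) // IsFractured R} → {S : Rel2 (Fin n) // IsConvex S},
      Function.Bijective f ∧
      ∀ (M : {R : Rel3 (Fin n) // IsFractured R}) (a b : Fin n),
        (M.1.r1 a b ↔ (f M).1.r2 a b) ∧
        (M.1.r2 a b ↔ (¬ (f M).1.r2 a b ∧ (f M).1.r1 a b)) ∧
        (M.1.r3 a b ↔ ((f M).1.r2 a b ∧ (f M).1.r1 a b)) := by

  refine ⟨fun M => ⟨toConvex M.1, toConvex_isConvex M.2⟩, ?_, ?_⟩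
  · refine Function.bijective_iff_has_inverse.mpr
      ⟨fun S => ⟨toFrac S.1, toFrac_isFractured S.2⟩, ?_, ?_⟩
    · intro M; exact Subtype.ext (toFrac_toConvex M.2)
    · intro S; exact Subtype.ext (toConvex_toFrac S.2)
  · intro M a b
    refine ⟨Iff.rfl, ?_, ?_⟩
    · show M.1.r2 a b ↔ (¬ M.1.r1 a b ∧ (M.1.r2 a b ∨ M.1.r3 a b))
      constructor
      · exact fun hab => ⟨frac_r2_not_E M.2 hab, Or.inl hab⟩
      · rintro ⟨hn, hab | hab⟩
        · exact hab
        · exact absurd (frac_r3_E M.2 hab) hn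
    · show M.1.r3 a b ↔ (M.1.r1 a b ∧ (M.1.r2 a b ∨ M.1.r3 a b))
      constructor
      · exact fun hab => ⟨frac_r3_E M.2 hab, Or.inr hab⟩
      · rintro ⟨hn, hab | hab⟩
        · exact absurd hn (frac_r2_not_E M.2 hab)
        · exact hab
end

section
/- Let L be a relational first-order language and L' a sublanguage of L (so every L-structure has an L'-reduct obtained by forgetting the interpretations of the symbols not in L'). For each n ≥ 1, let C(n) be a finite nonempty set of L-structures on {1, …, n} closed under isomorphism and C'(n) a finite nonempty set of L'-structures on {1, …, n} closed under isomorphism, such that the L'-reduct of every member of C(n) lies in C'(n) and the induced map from isomorphism classes of structures in C(n) to isomorphism classes of structures in C'(n) is a bijection (i.e., every structure in C'(n) is, up to isomorphism, the reduct of a structure in C(n) that is unique up to isomorphism). If C admits an unlabeled logical limit law, then C' admits an unlabeled logical limit law. -/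
open FirstOrder Language Filter

/-- Satisfaction of a sentence in a structure given as a term. -/
def SatIn {L : FirstOrder.Language} {M : Type*} (s : L.Structure M) (φ : L.Sentence) : Prop :=
  @FirstOrder.Language.Sentence.Realize L M s φ

/-- Isomorphism of two structures given as terms. -/
def IsoStr {L : FirstOrder.Language} {M N : Type*} (s : L.Structure M) (t : L.Structure N) :
    Prop :=
  Nonempty (@FirstOrder.Language.Equiv L M N s t)

/-- The reduct of a structure (given as a term) along a language map. -/
def reductOf {L L' : FirstOrder.Language} (ψ : L →ᴸ L') {M : Type*} (s : L'.Structure M) :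
    L.Structure M :=
  @FirstOrder.Language.LHom.reduct L L' ψ M s

/-- The number of isomorphism classes of structures in `C`. -/
noncomputable def isoClassCount {L : FirstOrder.Language} {n : ℕ}
    (C : Set (L.Structure (Fin n))) : ℕ :=
  Nat.card (Quot (fun M N : C => IsoStr M.1 N.1))


section Aux

open FirstOrder Language

lemma isoStr_refl {L : FirstOrder.Language} {M : Type*} (s : L.Structure M) : IsoStr s s :=
  ⟨@FirstOrder.Language.Equiv.refl L M s⟩

lemma isoStr_symm {L : FirstOrder.Language} {M N : Type*} {s : L.Structure M}
    {t : L.Structure N} (h : IsoStr s t) : IsoStr t s :=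
  h.elim fun g => ⟨@FirstOrder.Language.Equiv.symm L M N s t g⟩

lemma isoStr_trans {L : FirstOrder.Language} {M N P : Type*} {s : L.Structure M}
    {t : L.Structure N} {u : L.Structure P} (h : IsoStr s t) (h' : IsoStr t u) : IsoStr s u :=
  h.elim fun g => h'.elim fun g' => by
    letI := s; letI := t; letI := u
    exact ⟨g'.comp g⟩

lemma isoStr_equivalence {L : FirstOrder.Language} {M : Type*} (C : Set (L.Structure M)) :
    Equivalence (fun s t : C => IsoStr s.1 t.1) :=
  ⟨fun s => isoStr_refl s.1, fun h => isoStr_symm h, fun h h' => isoStr_trans h h'⟩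

lemma satIn_congr {L : FirstOrder.Language} {M N : Type*} {s : L.Structure M}
    {t : L.Structure N} (h : IsoStr s t) (φ : L.Sentence) : SatIn s φ ↔ SatIn t φ :=
  h.elim fun g => by
    letI := s; letI := t
    exact StrongHomClass.realize_sentence g φ

lemma isoStr_reduct {L L' : FirstOrder.Language} (ψ : L →ᴸ L') {M N : Type*}
    {s : L'.Structure M} {t : L'.Structure N} (h : IsoStr s t) :
    IsoStr (reductOf ψ s) (reductOf ψ t) := by
  obtain ⟨g⟩ := h
  letI := s; letI := t
  letI := reductOf ψ s; letI := reductOf ψ t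
  refine ⟨⟨g.toEquiv, ?_, ?_⟩⟩
  · intro n f x
    exact g.map_fun' (ψ.onFunction f) x
  · intro n r x
    exact g.map_rel' (ψ.onRelation r) x

lemma satIn_onSentence {L L' : FirstOrder.Language} (ψ : L →ᴸ L') {M : Type*}
    (s : L'.Structure M) (φ : L.Sentence) :
    SatIn s (ψ.onSentence φ) ↔ SatIn (reductOf ψ s) φ :=
  @LHom.realize_onSentence L L' M (@LHom.reduct L L' ψ M s) s ψ
    (@LHom.isExpansionOn_reduct L L' ψ M s) φ

lemma quot_card_eq {A B : Type*} {R : A → A → Prop} {S : B → B → Prop}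
    (hS : Equivalence S) (f : A → B)
    (hmap : ∀ a a', R a a' → S (f a) (f a'))
    (hsurj : ∀ b, ∃ a, S (f a) b)
    (hinj : ∀ a a', S (f a) (f a') → R a a') :
    Nat.card (Quot R) = Nat.card (Quot S) := by
  apply Nat.card_eq_of_bijective (Quot.map f hmap)
  constructor
  · intro x y
    induction x using Quot.ind with
    | _ a =>
    induction y using Quot.ind with
    | _ a' =>
    intro h
    exact Quot.sound (hinj a a' (hS.eqvGen_iff.mp (Quot.eqvGen_exact h)))
  · intro y
    induction y using Quot.ind with
    | _ b =>
      obtain ⟨a, ha⟩ := hsurj b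
      exact ⟨Quot.mk R a, Quot.sound ha⟩

end Aux

/-- **Unlabeled logical limit laws transfer to reducts.**
Let `L'` and `L''` be relational languages, and view `L'` as a sublanguage of
`L = L'.sum L''`, with reducts taken along the inclusion `LHom.sumInl` (forgetting the
symbols of `L''`). For `n ≥ 1` let `C(n)` and `C'(n)` be finite nonempty isomorphism-closed
sets of `L`- resp. `L'`-structures on `{1, …, n}` such that the reduct of every member of
`C(n)` lies in `C'(n)` and the induced map on isomorphism classes is a bijection (every
member of `C'(n)` is isomorphic to the reduct of a member of `C(n)`, and members of `C(n)`
with isomorphic reducts are isomorphic). If `C` admits an unlabeled logical limit law, then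
so does `C'`. -/
theorem reduct_unlabeled_limit_law (L' L'' : FirstOrder.Language)
    [L'.IsRelational] [L''.IsRelational]
    (C : (n : ℕ) → Set ((L'.sum L'').Structure (Fin n)))
    (C' : (n : ℕ) → Set (L'.Structure (Fin n)))
    (hCfin : ∀ n, 1 ≤ n → (C n).Finite) (hCne : ∀ n, 1 ≤ n → (C n).Nonempty)
    (hC'fin : ∀ n, 1 ≤ n → (C' n).Finite) (hC'ne : ∀ n, 1 ≤ n → (C' n).Nonempty)
    (hCiso : ∀ n, 1 ≤ n → ∀ M ∈ C n, ∀ N, IsoStr M N → N ∈ C n)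
    (hC'iso : ∀ n, 1 ≤ n → ∀ M ∈ C' n, ∀ N, IsoStr M N → N ∈ C' n)
    (hred : ∀ n, 1 ≤ n → ∀ M ∈ C n, reductOf LHom.sumInl M ∈ C' n)
    (hsurj : ∀ n, 1 ≤ n → ∀ M' ∈ C' n, ∃ M ∈ C n, IsoStr (reductOf LHom.sumInl M) M')
    (hinj : ∀ n, 1 ≤ n → ∀ M ∈ C n, ∀ N ∈ C n,
      IsoStr (reductOf LHom.sumInl M) (reductOf LHom.sumInl N) → IsoStr M N)
    (hlim : ∀ φ : (L'.sum L'').Sentence, ∃ L : ℝ, Filter.Tendsto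
      (fun n : ℕ => (isoClassCount {M ∈ C n | SatIn M φ} : ℝ) / (isoClassCount (C n) : ℝ))
      Filter.atTop (nhds L)) :
    ∀ φ' : L'.Sentence, ∃ L : ℝ, Filter.Tendsto
      (fun n : ℕ => (isoClassCount {M ∈ C' n | SatIn M φ'} : ℝ) /
        (isoClassCount (C' n) : ℝ))
      Filter.atTop (nhds L) := by
  intro φ'
  obtain ⟨Lv, hLv⟩ := hlim (LHom.sumInl.onSentence φ')
  refine ⟨Lv, hLv.congr' ?_⟩
  filter_upwards [eventually_ge_atTop 1] with n hn
  have h2 : isoClassCount (C n) = isoClassCount (C' n) := by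
    refine quot_card_eq (isoStr_equivalence (C' n))
      (fun M => ⟨reductOf LHom.sumInl M.1, hred n hn M.1 M.2⟩)
      (fun a a' h => isoStr_reduct _ h) ?_ (fun a a' h => hinj n hn a.1 a.2 a'.1 a'.2 h)
    rintro ⟨M', hM'⟩
    obtain ⟨M, hM, hiso⟩ := hsurj n hn M' hM'
    exact ⟨⟨M, hM⟩, hiso⟩
  have h1 : isoClassCount {M ∈ C n | SatIn M (LHom.sumInl.onSentence φ')}
      = isoClassCount {M ∈ C' n | SatIn M φ'} := by
    refine quot_card_eq (isoStr_equivalence _)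
      (fun M => ⟨reductOf LHom.sumInl M.1,
        hred n hn M.1 M.2.1, (satIn_onSentence _ _ _).mp M.2.2⟩)
      (fun a a' h => isoStr_reduct _ h) ?_
      (fun a a' h => hinj n hn a.1 a.2.1 a'.1 a'.2.1 h)
    rintro ⟨M', hM', hsat⟩
    obtain ⟨M, hM, hiso⟩ := hsurj n hn M' hM'
    have hsat' : SatIn M (LHom.sumInl.onSentence φ') :=
      (satIn_onSentence _ _ _).mpr ((satIn_congr hiso φ').mpr hsat)
    exact ⟨⟨M, hM, hsat'⟩, hiso⟩
  rw [h1, h2]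
end

section
/- Every composition (E, ≺₁) on a finite set X can be expanded by a binary relation ≺₂ on X so that (E, ≺₁, ≺₂) is a fractured order, and any two such expansions of the same composition are isomorphic as fractured orders; that is, every finite composition expands to a fractured order uniquely up to isomorphism. -/
/-- `(r1, r2) = (E, ≺₁)` is a composition: `E` is an equivalence relation, `≺₁` is a strict
partial order such that distinct points are `≺₁`-comparable iff they are not `E`-related,
and `≺₁` lifts along `E`. -/
def IsComposition {X : Type} (R : Rel2 X) : Prop :=
  Equivalence R.r1 ∧ IsSPO R.r2 ∧
    (∀ a b, a ≠ b → ((R.r2 a b ∨ R.r2 b a) ↔ ¬ R.r1 a b)) ∧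
    (∀ a a' b, R.r1 a a' → R.r2 a b → R.r2 a' b)

/-- Isomorphism of triples of binary relations: a bijection preserving all three relations
in both directions. -/
def Rel3.Iso {X Y : Type} (R : Rel3 X) (S : Rel3 Y) : Prop :=
  ∃ e : X ≃ Y, (∀ a b, R.r1 a b ↔ S.r1 (e a) (e b)) ∧
    (∀ a b, R.r2 a b ↔ S.r2 (e a) (e b)) ∧ (∀ a b, R.r3 a b ↔ S.r3 (e a) (e b))

theorem exists_equiv_of_sto {α : Type} [Finite α] (r s : α → α → Prop)
    (hr : IsStrictTotalOrder α r) (hs : IsStrictTotalOrder α s) :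
    ∃ e : α ≃ α, ∀ a b, r a b ↔ s (e a) (e b) := by
  classical
  cases nonempty_fintype α
  haveI := hr; haveI := hs
  haveI : IsWellOrder α r := { wf := Finite.wellFounded_of_trans_of_irrefl r }
  haveI : IsWellOrder α s := { wf := Finite.wellFounded_of_trans_of_irrefl s }
  have h : Ordinal.type r = Ordinal.type s := by
    rw [Ordinal.type_fintype, Ordinal.type_fintype]
  obtain ⟨f⟩ := Ordinal.type_eq.mp h
  exact ⟨f.toEquiv, fun a b => f.map_rel_iff.symm⟩

/-- **Every finite composition expands to a fractured order, uniquely up to isomorphism.**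
Every composition `(E, ≺₁)` on a finite set `X` can be expanded by a relation `≺₂` to a
fractured order `(E, ≺₁, ≺₂)`, and any two such expansions are isomorphic as fractured
orders. -/
theorem composition_expands_uniquely (X : Type) [Finite X] (R : Rel2 X)
    (hR : IsComposition R) :
    (∃ p : X → X → Prop, IsFractured ⟨R.r1, R.r2, p⟩) ∧
    (∀ p q : X → X → Prop, IsFractured ⟨R.r1, R.r2, p⟩ → IsFractured ⟨R.r1, R.r2, q⟩ →
      Rel3.Iso ⟨R.r1, R.r2, p⟩ ⟨R.r1, R.r2, q⟩) := by
  classical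
  obtain ⟨hE, hSPO, hcomp, hlift⟩ := hR
  constructor
  · -- existence
    refine ⟨fun a b => R.r1 a b ∧ WellOrderingRel a b, hE, hSPO, ⟨?_, ?_⟩, hcomp, ?_, hlift⟩
    · rintro a ⟨-, h⟩; exact irrefl _ h
    · rintro a b c ⟨h1, h2⟩ ⟨h3, h4⟩; exact ⟨hE.trans h1 h3, _root_.trans h2 h4⟩
    · intro a b hab
      constructor
      · rintro (⟨h, -⟩ | ⟨h, -⟩)
        · exact h
        · exact hE.symm h
      · intro h
        rcases trichotomous_of WellOrderingRel a b with hw | hw | hw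
        · exact Or.inl ⟨h, hw⟩
        · exact absurd hw hab
        · exact Or.inr ⟨hE.symm h, hw⟩
  · -- uniqueness
    intro p q hp hq
    obtain ⟨-, -, ⟨hpi, hpt⟩, -, hpc, -⟩ := hp
    obtain ⟨-, -, ⟨hqi, hqt⟩, -, hqc, -⟩ := hq
    have hasym : ∀ a b, R.r2 a b → ¬ R.r2 b a := fun a b h h' =>
      hSPO.1 a (hSPO.2 _ _ _ h h')
    have hrlift : ∀ a b b', R.r1 b b' → R.r2 a b → R.r2 a b' := by
      intro a b b' hbb' hab
      have hab' : a ≠ b := fun h => hSPO.1 a (h ▸ hab)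
      have hnr1 : ¬ R.r1 a b := (hcomp a b hab').mp (Or.inl hab)
      have hne : a ≠ b' := fun h => hnr1 (hE.symm (h ▸ hbb'))
      have hnr1' : ¬ R.r1 a b' := fun h => hnr1 (hE.trans h (hE.symm hbb'))
      rcases (hcomp a b' hne).mpr hnr1' with h | h
      · exact h
      · exact absurd (hlift b' b a (hE.symm hbb') h) (hasym a b hab)
    set s : Setoid X := ⟨R.r1, hE⟩ with hs
    have sto : ∀ (r : X → X → Prop), IsSPO r →
        (∀ a b, a ≠ b → ((r a b ∨ r b a) ↔ R.r1 a b)) →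
        ∀ c : Quotient s, IsStrictTotalOrder {y : X // Quotient.mk s y = c}
          (fun a b => r a.1 b.1) := by
      intro r hr hrc c
      haveI h1 : IsIrrefl {y : X // Quotient.mk s y = c} (fun a b => r a.1 b.1) :=
        ⟨fun a => hr.1 a.1⟩
      haveI h2 : IsTrans {y : X // Quotient.mk s y = c} (fun a b => r a.1 b.1) :=
        ⟨fun a b c => hr.2 a.1 b.1 c.1⟩
      haveI h3 : IsTrichotomous {y : X // Quotient.mk s y = c} (fun a b => r a.1 b.1) := by
        refine ⟨fun a b hab hba => ?_⟩
        suffices r a.1 b.1 ∨ a = b ∨ r b.1 a.1 by tauto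
        rcases eq_or_ne a.1 b.1 with h | h
        · exact Or.inr (Or.inl (Subtype.ext h))
        · have hr1 : R.r1 a.1 b.1 := Quotient.exact (a.2.trans b.2.symm)
          rcases (hrc a.1 b.1 h).mpr hr1 with h' | h'
          · exact Or.inl h'
          · exact Or.inr (Or.inr h')
      exact { toTrichotomous := h3, toIsStrictOrder := { toIrrefl := h1, toIsTrans := h2 } }
    have key := fun c => exists_equiv_of_sto _ _ (sto p ⟨hpi, hpt⟩ hpc c) (sto q ⟨hqi, hqt⟩ hqc c)
    choose φ hφ using key
    let e : X ≃ X := (Equiv.sigmaFiberEquiv (Quotient.mk s)).symm.trans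
      ((Equiv.sigmaCongrRight φ).trans (Equiv.sigmaFiberEquiv (Quotient.mk s)))
    have he : ∀ (c : Quotient s) (y : X) (h : Quotient.mk s y = c), e y = (φ c ⟨y, h⟩).1 := by
      intro c y h; subst h; rfl
    have hemk : ∀ y : X, Quotient.mk s (e y) = Quotient.mk s y := by
      intro y
      rw [he (Quotient.mk s y) y rfl]
      exact (φ (Quotient.mk s y) ⟨y, rfl⟩).2
    have her1 : ∀ y : X, R.r1 (e y) y := fun y => Quotient.exact (hemk y)
    refine ⟨e, ?_, ?_, ?_⟩
    · intro a b
      constructor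
      · intro h; exact hE.trans (her1 a) (hE.trans h (hE.symm (her1 b)))
      · intro h; exact hE.trans (hE.symm (her1 a)) (hE.trans h (her1 b))
    · intro a b
      constructor
      · intro h; exact hrlift _ _ _ (hE.symm (her1 b)) (hlift _ _ _ (hE.symm (her1 a)) h)
      · intro h; exact hrlift _ _ _ (her1 b) (hlift _ _ _ (her1 a) h)
    · intro a b
      rcases eq_or_ne (Quotient.mk s b) (Quotient.mk s a) with h | h
      · rw [he (Quotient.mk s a) a rfl, he (Quotient.mk s a) b h]
        exact hφ (Quotient.mk s a) ⟨a, rfl⟩ ⟨b, h⟩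
      · have hne : a ≠ b := fun hh => h (hh ▸ rfl)
        have hnr1 : ¬ R.r1 a b := fun hh => h (Quotient.sound (hE.symm hh))
        have h1 : ¬ p a b := fun hh => hnr1 ((hpc a b hne).mp (Or.inl hh))
        have h2 : ¬ q (e a) (e b) := by
          intro hh
          have hne' : e a ≠ e b := fun hh' => hnr1
            (hE.trans (hE.symm (her1 a)) (hh' ▸ her1 b))
          have hq1 : R.r1 (e a) (e b) := (hqc _ _ hne').mp (Or.inl hh)
          exact hnr1 (hE.trans (hE.symm (her1 a)) (hE.trans hq1 (her1 b)))
        exact iff_of_false h1 h2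
end
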